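/- arXiv:2311.05785 — 9 statements merged into one kernel-verified Lean document; each statement's English description precedes it below -/
import Mathlib

section
/- Let N ≥ 2 be an integer, ε > 0, L > 0, t ≥ 0, Γ ≥ 0, and let λ_1 < λ_2 < ⋯ < λ_N be real numbers with −L < λ_j < 0 for all j, and γ_1, …, γ_N be real numbers with |γ_j| ≤ Γ for all j. Let B be the N×N Hermitian matrix with entries B_{jk} = −iε/(λ_j − λ_k) for j ≠ k and B_{jj} = −2λ_j t − γ_j, let Δ be the diagonal matrix with Δ_{jj} = 1/(−2λ_j), and set C := B + iεΔ. Then every eigenvalue σ of C satisfies |Re σ| ≤ (2tL + Γ) + εN / min_{s≠j} |λ_s − λ_j|. -/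
/-!
Gershgorin's theorem places every eigenvalue `σ` of `C` in a disc around some diagonal entry
`C k k` of radius `∑_{j ≠ k} ‖C k j‖`. The real part of `C k k` is `-2 λ_k t - γ_k`, since the
`iεΔ` part is purely imaginary, so it is at most `2tL + Γ` in absolute value; each off-diagonal
entry has modulus `ε / |λ_k - λ_j| ≤ ε / d`, and there are fewer than `N` of them.
-/

open Finset

theorem Matrix.abs_re_le_of_mulVec_eq_smul {n : Type*} [Fintype n] [DecidableEq n]
    {A : Matrix n n ℂ} {σ : ℂ} {w : n → ℂ} (hw0 : w ≠ 0) (hw : A.mulVec w = σ • w)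
    {a c : ℝ} (hc : 0 ≤ c) (hdiag : ∀ k, |(A k k).re| ≤ a)
    (hoff : ∀ k j, j ≠ k → ‖A k j‖ ≤ c) :
    |σ.re| ≤ a + Fintype.card n * c := by
  have hσ : Module.End.HasEigenvalue (Matrix.toLin' A) σ :=
    Module.End.hasEigenvalue_of_hasEigenvector
      ⟨by rwa [Module.End.mem_eigenspace_iff, Matrix.toLin'_apply], hw0⟩
  obtain ⟨k, hk⟩ := eigenvalue_mem_ball hσ
  rw [Metric.mem_closedBall, dist_eq_norm] at hk
  have hrow : ∑ j ∈ univ.erase k, ‖A k j‖ ≤ Fintype.card n * c :=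
    calc ∑ j ∈ univ.erase k, ‖A k j‖ ≤ #(univ.erase k) • c :=
          sum_le_card_nsmul _ _ _ fun j hj => hoff k j (ne_of_mem_erase hj)
      _ ≤ Fintype.card n * c := by
          rw [nsmul_eq_mul]
          gcongr
          exact_mod_cast card_erase_le.trans_eq card_univ
  calc |σ.re| ≤ |(A k k).re| + |(σ - A k k).re| := by
        rw [Complex.sub_re]
        linarith [abs_sub_abs_le_abs_sub σ.re (A k k).re]
    _ ≤ a + Fintype.card n * c :=
        add_le_add (hdiag k) ((Complex.abs_re_le_norm _).trans (hk.trans hrow))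

theorem abs_neg_two_mul_mul_sub_le {x t g L Γ : ℝ} (hx : x ∈ Set.Ioo (-L) 0) (ht : 0 ≤ t)
    (hg : |g| ≤ Γ) : |-2 * x * t - g| ≤ 2 * t * L + Γ := by
  have hxt : |-2 * x * t| ≤ 2 * t * L := by
    rw [abs_of_nonneg (by nlinarith [hx.2])]
    nlinarith [hx.1]
  exact (abs_sub _ _).trans (add_le_add hxt hg)

theorem pos_of_isLeast_abs_sub {ι : Type*} {f : ι → ℝ} (hf : Function.Injective f) {d : ℝ}
    (hd : IsLeast {r : ℝ | ∃ s j : ι, s ≠ j ∧ r = |f s - f j|} d) : 0 < d := by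
  obtain ⟨s, j, hsj, rfl⟩ := hd.1
  exact abs_pos.mpr (sub_ne_zero.mpr (hf.ne hsj))

section BenjaminOnoMatrix

variable {N : ℕ} {ε t : ℝ} {lam γ : Fin N → ℝ} {B C : Matrix (Fin N) (Fin N) ℂ}

theorem re_diag_of_benjaminOno
    (hB : ∀ j k, B j k = if j = k then (((-2) * lam j * t - γ j : ℝ) : ℂ)
        else -Complex.I * (ε : ℂ) / ((lam j : ℂ) - (lam k : ℂ)))
    (hC : C = B + Matrix.diagonal (fun j => Complex.I * (ε : ℂ) * (1 / (-2 * (lam j : ℂ)))))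
    (k : Fin N) : (C k k).re = -2 * lam k * t - γ k := by
  simp [hC, hB]

theorem norm_offDiag_of_benjaminOno
    (hB : ∀ j k, B j k = if j = k then (((-2) * lam j * t - γ j : ℝ) : ℂ)
        else -Complex.I * (ε : ℂ) / ((lam j : ℂ) - (lam k : ℂ)))
    (hC : C = B + Matrix.diagonal (fun j => Complex.I * (ε : ℂ) * (1 / (-2 * (lam j : ℂ)))))
    {k j : Fin N} (hkj : k ≠ j) : ‖C k j‖ = |ε| / |lam k - lam j| := by
  simp [hC, hB, hkj, ← Complex.ofReal_sub]

end BenjaminOnoMatrix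

theorem stmt1_general (N : ℕ) (ε L t Γ : ℝ) (hε : 0 < ε)
    (ht : 0 ≤ t)
    (lam : Fin N → ℝ) (hmono : StrictMono lam)
    (hrange : ∀ j, lam j ∈ Set.Ioo (-L) 0)
    (γ : Fin N → ℝ) (hγ : ∀ j, |γ j| ≤ Γ)
    (B : Matrix (Fin N) (Fin N) ℂ)
    (hB : ∀ j k, B j k = if j = k then (((-2) * lam j * t - γ j : ℝ) : ℂ)
        else -Complex.I * (ε : ℂ) / ((lam j : ℂ) - (lam k : ℂ)))
    (C : Matrix (Fin N) (Fin N) ℂ)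
    (hC : C = B + Matrix.diagonal (fun j => Complex.I * (ε : ℂ) * (1 / (-2 * (lam j : ℂ)))))
    (d : ℝ) (hd : IsLeast {r : ℝ | ∃ s j : Fin N, s ≠ j ∧ r = |lam s - lam j|} d)
    (σ : ℂ) (hσ : ∃ w : Fin N → ℂ, w ≠ 0 ∧ C.mulVec w = σ • w) :
    |σ.re| ≤ (2 * t * L + Γ) + ε * N / d := by
  obtain ⟨w, hw0, hw⟩ := hσ
  have hd0 : 0 < d := pos_of_isLeast_abs_sub hmono.injective hd
  have hoff : ∀ k j, j ≠ k → ‖C k j‖ ≤ ε / d := fun k j hjk => by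
    rw [norm_offDiag_of_benjaminOno hB hC hjk.symm, abs_of_pos hε]
    exact div_le_div_of_nonneg_left hε.le hd0 (hd.2 ⟨k, j, hjk.symm, rfl⟩)
  have hdiag : ∀ k, |(C k k).re| ≤ 2 * t * L + Γ := fun k => by
    rw [re_diag_of_benjaminOno hB hC]
    exact abs_neg_two_mul_mul_sub_le (hrange k) ht (hγ k)
  calc |σ.re| ≤ (2 * t * L + Γ) + Fintype.card (Fin N) * (ε / d) :=
        C.abs_re_le_of_mulVec_eq_smul hw0 hw (by positivity) hdiag hoff
    _ = (2 * t * L + Γ) + ε * N / d := by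
        rw [Fintype.card_fin]
        ring

theorem stmt1 (N : ℕ) (hN : 2 ≤ N) (ε L t Γ : ℝ) (hε : 0 < ε) (hL : 0 < L)
    (ht : 0 ≤ t) (hΓ : 0 ≤ Γ)
    (lam : Fin N → ℝ) (hmono : StrictMono lam)
    (hrange : ∀ j, lam j ∈ Set.Ioo (-L) 0)
    (γ : Fin N → ℝ) (hγ : ∀ j, |γ j| ≤ Γ)
    (B : Matrix (Fin N) (Fin N) ℂ)
    (hB : ∀ j k, B j k = if j = k then (((-2) * lam j * t - γ j : ℝ) : ℂ)
        else -Complex.I * (ε : ℂ) / ((lam j : ℂ) - (lam k : ℂ)))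
    (C : Matrix (Fin N) (Fin N) ℂ)
    (hC : C = B + Matrix.diagonal (fun j => Complex.I * (ε : ℂ) * (1 / (-2 * (lam j : ℂ)))))
    (d : ℝ) (hd : IsLeast {r : ℝ | ∃ s j : Fin N, s ≠ j ∧ r = |lam s - lam j|} d)
    (σ : ℂ) (hσ : ∃ w : Fin N → ℂ, w ≠ 0 ∧ C.mulVec w = σ • w) :
    |σ.re| ≤ (2 * t * L + Γ) + ε * N / d :=
  stmt1_general N ε L t Γ hε ht lam hmono hrange γ hγ B hB C hC d hd σ hσ
end

section
/- (Tail of the upper-branch sum.) Let q₋, q₊ > 0 and r₋, r₊ satisfy 0 < r₋ < 2q₋ + 1 and 0 < r₊ < 2q₊ + 1, and let 0 < c < C and c_U > 0. Let μ : (0,1) → ℝ be strictly increasing, continuously differentiable, and surjective onto ℝ, such that for all sufficiently small y > 0 one has −Cy^{−q₋} < μ(y) < −cy^{−q₋} and |μ′(y)| ≤ C y^{−(q₋+1)}, and for all y sufficiently close to 1 one has c(1−y)^{−q₊} < μ(y) < C(1−y)^{−q₊} and |μ′(y)| ≤ C(1−y)^{−(q₊+1)}. Let ν : (0,1) → ℝ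 be continuous with ν(y) ≥ c_U for all y, and with c·y^{−r₋} < ν(y) < C·y^{−r₋} for y near 0 and c·(1−y)^{−r₊} < ν(y) < C·(1−y)^{−r₊} for y near 1. Fix x ∈ ℝ and η > 0. Let (ε_n) and (δ_n) be positive sequences with δ_n → 0 and ε_n/δ_n → 0, and let (N_n) be positive integers with ε_n N_n → m for some m > 0. Then, with y_k := (k − 1/2)/N_n, there is a constant C′ such that for all sufficiently large n, Σ over those k ∈ {1,…,N_n} with |μ(y_k) − x| ≥ η of 2ε_nδ_nν(y_k)/((x − μ(y_k))² + δ_n²ν(y_k)²) ≤ C′ δ_n. -/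
open scoped BigOperators

private lemma aux_mvt_rpow {s : ℝ} (hs0 : 0 < s) (hs1 : s < 1) {a : ℝ} (ha : 0 < a) :
    (1 - s) * (a + 1) ^ (-s) ≤ (a + 1) ^ (1 - s) - a ^ (1 - s) := by
  have hlt : a < a + 1 := by linarith
  obtain ⟨ξ, hξ, heq⟩ := exists_hasDerivAt_eq_slope (fun x : ℝ => x ^ (1 - s))
    (fun x : ℝ => (1 - s) * x ^ (-s)) hlt
    (fun x hx => (Real.continuousAt_rpow_const x (1 - s)
      (Or.inl (ne_of_gt (lt_of_lt_of_le ha hx.1)))).continuousWithinAt)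
    (fun x hx => by
      have h := Real.hasDerivAt_rpow_const (x := x) (p := 1 - s)
        (Or.inl (ne_of_gt (ha.trans hx.1)))
      simpa [show (1 : ℝ) - s - 1 = -s by ring] using h)
  have hξ0 : 0 < ξ := ha.trans hξ.1
  have hmono : (a + 1) ^ (-s) ≤ ξ ^ (-s) :=
    Real.rpow_le_rpow_of_nonpos hξ0 hξ.2.le (by linarith)
  have heq' : (1 - s) * ξ ^ (-s) = (a + 1) ^ (1 - s) - a ^ (1 - s) := by
    have : a + 1 - a = 1 := by ring
    rw [this, div_one] at heq
    exact heq
  have h1s : (0:ℝ) ≤ 1 - s := by linarith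
  nlinarith [mul_le_mul_of_nonneg_left hmono h1s]

private lemma aux_sum_rpow {s : ℝ} (hs0 : 0 < s) (hs1 : s < 1) :
    ∀ N : ℕ, ∑ k ∈ Finset.Icc 1 N, (k : ℝ) ^ (-s) ≤ (N : ℝ) ^ (1 - s) / (1 - s) := by
  have h1s : (0:ℝ) < 1 - s := by linarith
  intro N
  induction N with
  | zero => simp [Real.zero_rpow (ne_of_gt h1s)]
  | succ N ih =>
    rw [Finset.sum_Icc_succ_top (by omega : 1 ≤ N + 1)]
    rcases Nat.eq_zero_or_pos N with h0 | hNpos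
    · subst h0
      rw [show Finset.Icc 1 0 = (∅ : Finset ℕ) by decide]
      simp only [Finset.sum_empty, zero_add, Nat.zero_add, Nat.cast_one, Real.one_rpow]
      rw [le_div_iff₀ h1s]
      linarith
    · have ha : (0:ℝ) < N := by exact_mod_cast hNpos
      have hmvt := aux_mvt_rpow hs0 hs1 ha
      have hcast : ((N + 1 : ℕ) : ℝ) = (N : ℝ) + 1 := by push_cast; ring
      rw [hcast]
      have hterm : ((N:ℝ) + 1) ^ (-s) ≤ (((N:ℝ) + 1) ^ (1 - s) - (N:ℝ) ^ (1 - s)) / (1 - s) := by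
        rw [le_div_iff₀ h1s]
        nlinarith
      calc ∑ k ∈ Finset.Icc 1 N, (k : ℝ) ^ (-s) + ((N:ℝ) + 1) ^ (-s)
          ≤ (N : ℝ) ^ (1 - s) / (1 - s)
            + (((N:ℝ) + 1) ^ (1 - s) - (N:ℝ) ^ (1 - s)) / (1 - s) := by
            exact add_le_add ih hterm
        _ = ((N:ℝ) + 1) ^ (1 - s) / (1 - s) := by ring

private lemma aux_sum_yk {s : ℝ} (hs0 : 0 < s) (hs1 : s < 1) (N : ℕ) (hN : 0 < N) :
    ∑ k ∈ Finset.Icc 1 N, (((k : ℝ) - 1/2) / (N : ℝ)) ^ (-s) ≤ 2 * N / (1 - s) := by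
  have hN0 : (0:ℝ) < N := by exact_mod_cast hN
  have h1s : (0:ℝ) < 1 - s := by linarith
  have hstep : ∀ k ∈ Finset.Icc 1 N,
      (((k : ℝ) - 1/2) / (N : ℝ)) ^ (-s) ≤ (2:ℝ) ^ s * (N:ℝ) ^ s * (k:ℝ) ^ (-s) := by
    intro k hk
    obtain ⟨hk1, hk2⟩ := Finset.mem_Icc.mp hk
    have hk1' : (1:ℝ) ≤ k := by exact_mod_cast hk1
    have hbase : (0:ℝ) < (k:ℝ) / (2 * N) := by positivity
    have hle : (k:ℝ) / (2 * N) ≤ ((k : ℝ) - 1/2) / (N : ℝ) := by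
      rw [div_le_div_iff₀ (by positivity) hN0]
      nlinarith
    have h1 : (((k : ℝ) - 1/2) / (N : ℝ)) ^ (-s) ≤ ((k:ℝ) / (2 * N)) ^ (-s) :=
      Real.rpow_le_rpow_of_nonpos hbase hle (by linarith)
    have h2 : ((k:ℝ) / (2 * N)) ^ (-s) = (2:ℝ) ^ s * (N:ℝ) ^ s * (k:ℝ) ^ (-s) := by
      rw [Real.rpow_neg hbase.le, Real.div_rpow (by positivity) (by positivity), inv_div,
        Real.mul_rpow (by norm_num) hN0.le, Real.rpow_neg (by positivity), div_eq_mul_inv]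
    rw [← h2]; exact h1
  calc ∑ k ∈ Finset.Icc 1 N, (((k : ℝ) - 1/2) / (N : ℝ)) ^ (-s)
      ≤ ∑ k ∈ Finset.Icc 1 N, (2:ℝ) ^ s * (N:ℝ) ^ s * (k:ℝ) ^ (-s) :=
        Finset.sum_le_sum hstep
    _ = (2:ℝ) ^ s * (N:ℝ) ^ s * ∑ k ∈ Finset.Icc 1 N, (k:ℝ) ^ (-s) := by
        rw [Finset.mul_sum]
    _ ≤ (2:ℝ) ^ s * (N:ℝ) ^ s * ((N : ℝ) ^ (1 - s) / (1 - s)) := by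
        apply mul_le_mul_of_nonneg_left (aux_sum_rpow hs0 hs1 N) (by positivity)
    _ = (2:ℝ) ^ s * ((N:ℝ) ^ s * (N : ℝ) ^ (1 - s)) / (1 - s) := by ring
    _ = (2:ℝ) ^ s * (N:ℝ) / (1 - s) := by
        rw [← Real.rpow_add hN0]
        norm_num
    _ ≤ 2 * N / (1 - s) := by
        have h2s : (2:ℝ) ^ s ≤ 2 := by
          calc (2:ℝ) ^ s ≤ (2:ℝ) ^ (1:ℝ) :=
            Real.rpow_le_rpow_of_exponent_le (by norm_num) (by linarith)
          _ = 2 := Real.rpow_one 2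
        gcongr

set_option maxHeartbeats 1000000 in
theorem stmt3 (qm qp rm rp c C cU : ℝ)
    (hqm : 0 < qm) (hqp : 0 < qp)
    (hrm0 : 0 < rm) (hrm : rm < 2 * qm + 1)
    (hrp0 : 0 < rp) (hrp : rp < 2 * qp + 1)
    (hc : 0 < c) (hcC : c < C) (hcU : 0 < cU)
    (μ μ' : ℝ → ℝ)
    (hμmono : StrictMonoOn μ (Set.Ioo 0 1))
    (hμderiv : ∀ y ∈ Set.Ioo (0:ℝ) 1, HasDerivAt μ (μ' y) y)
    (hμ'cont : ContinuousOn μ' (Set.Ioo 0 1))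
    (hμsurj : Set.SurjOn μ (Set.Ioo 0 1) Set.univ)
    (hμ0 : ∃ a ∈ Set.Ioo (0:ℝ) 1, ∀ y ∈ Set.Ioo (0:ℝ) a,
      -C * y ^ (-qm) < μ y ∧ μ y < -c * y ^ (-qm) ∧ |μ' y| ≤ C * y ^ (-(qm + 1)))
    (hμ1 : ∃ b ∈ Set.Ioo (0:ℝ) 1, ∀ y ∈ Set.Ioo b 1,
      c * (1 - y) ^ (-qp) < μ y ∧ μ y < C * (1 - y) ^ (-qp) ∧
        |μ' y| ≤ C * (1 - y) ^ (-(qp + 1)))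
    (ν : ℝ → ℝ) (hνcont : ContinuousOn ν (Set.Ioo 0 1))
    (hνlow : ∀ y ∈ Set.Ioo (0:ℝ) 1, cU ≤ ν y)
    (hν0 : ∃ a ∈ Set.Ioo (0:ℝ) 1, ∀ y ∈ Set.Ioo (0:ℝ) a,
      c * y ^ (-rm) < ν y ∧ ν y < C * y ^ (-rm))
    (hν1 : ∃ b ∈ Set.Ioo (0:ℝ) 1, ∀ y ∈ Set.Ioo b 1,
      c * (1 - y) ^ (-rp) < ν y ∧ ν y < C * (1 - y) ^ (-rp))
    (x η : ℝ) (hη : 0 < η)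
    (ε δ : ℕ → ℝ) (hεpos : ∀ n, 0 < ε n) (hδpos : ∀ n, 0 < δ n)
    (hδ0 : Filter.Tendsto δ Filter.atTop (nhds 0))
    (hεδ : Filter.Tendsto (fun n => ε n / δ n) Filter.atTop (nhds 0))
    (Nn : ℕ → ℕ) (hNpos : ∀ n, 0 < Nn n) (m : ℝ) (hm : 0 < m)
    (hεN : Filter.Tendsto (fun n => ε n * (Nn n : ℝ)) Filter.atTop (nhds m)) :
    ∃ C' : ℝ, ∃ n₀ : ℕ, ∀ n ≥ n₀,
      ∑ k ∈ (Finset.Icc 1 (Nn n)).filter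
          (fun k : ℕ => η ≤ |μ (((k : ℝ) - 1/2) / (Nn n : ℝ)) - x|),
        2 * ε n * δ n * ν (((k : ℝ) - 1/2) / (Nn n : ℝ)) /
          ((x - μ (((k : ℝ) - 1/2) / (Nn n : ℝ))) ^ 2 +
            (δ n) ^ 2 * ν (((k : ℝ) - 1/2) / (Nn n : ℝ)) ^ 2) ≤ C' * δ n := by
  obtain ⟨a₁, ha₁, hμ0'⟩ := hμ0
  obtain ⟨a₂, ha₂, hν0'⟩ := hν0
  obtain ⟨b₁, hb₁, hμ1'⟩ := hμ1
  obtain ⟨b₂, hb₂, hν1'⟩ := hν1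
  have hC : 0 < C := hc.trans hcC
  have hxc : (0:ℝ) < c / (2 * (|x| + 1)) := by positivity
  set tm : ℝ := (c / (2 * (|x| + 1))) ^ (1 / qm) with htm_def
  set tp : ℝ := (c / (2 * (|x| + 1))) ^ (1 / qp) with htp_def
  have htm : 0 < tm := Real.rpow_pos_of_pos hxc _
  have htp : 0 < tp := Real.rpow_pos_of_pos hxc _
  set A : ℝ := min (min a₁ a₂) (min (1/2) tm) with hA_def
  set B : ℝ := min (min (1 - b₁) (1 - b₂)) (min (1/2) tp) with hB_def
  have hA : 0 < A := lt_min (lt_min ha₁.1 ha₂.1) (lt_min (by norm_num) htm)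
  have hB : 0 < B := lt_min (lt_min (by linarith [hb₁.2]) (by linarith [hb₂.2]))
    (lt_min (by norm_num) htp)
  have hAhalf : A ≤ 1/2 := le_trans (min_le_right _ _) (min_le_left _ _)
  have hBhalf : B ≤ 1/2 := le_trans (min_le_right _ _) (min_le_left _ _)
  -- threshold bound
  have hxbound : ∀ (q t y : ℝ), 0 < q → t = (c / (2 * (|x| + 1))) ^ (1 / q) → 0 < y → y ≤ t →
      |x| + 1 ≤ c / 2 * y ^ (-q) := by
    intro q t y hq ht hy hyt
    have h1 : t ^ (-q) ≤ y ^ (-q) := Real.rpow_le_rpow_of_nonpos hy hyt (by linarith)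
    have h2 : t ^ (-q) = 2 * (|x| + 1) / c := by
      rw [ht, ← Real.rpow_mul hxc.le, show 1 / q * -q = -1 by field_simp,
        Real.rpow_neg_one, inv_div]
    rw [h2] at h1
    have h3 := mul_le_mul_of_nonneg_left h1 (by positivity : (0:ℝ) ≤ c / 2)
    have h4 : c / 2 * (2 * (|x| + 1) / c) = |x| + 1 := by field_simp
    linarith
  -- left edge estimates
  have hedge0 : ∀ y : ℝ, 0 < y → y < A →
      c / 2 * y ^ (-qm) ≤ x - μ y ∧ ν y < C * y ^ (-rm) := by
    intro y hy hyA
    have hya₁ : y ∈ Set.Ioo 0 a₁ :=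
      ⟨hy, hyA.trans_le (le_trans (min_le_left _ _) (min_le_left _ _))⟩
    have hya₂ : y ∈ Set.Ioo 0 a₂ :=
      ⟨hy, hyA.trans_le (le_trans (min_le_left _ _) (min_le_right _ _))⟩
    obtain ⟨_, hμlt, _⟩ := hμ0' y hya₁
    have hxb := hxbound qm tm y hqm rfl hy
      (le_of_lt (hyA.trans_le (le_trans (min_le_right _ _) (min_le_right _ _))))
    refine ⟨?_, (hν0' y hya₂).2⟩
    have hax : -|x| ≤ x := neg_abs_le x
    have hcy : c * y ^ (-qm) = 2 * (c / 2 * y ^ (-qm)) := by ring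
    linarith
  -- right edge estimates
  have hedge1 : ∀ y : ℝ, y < 1 → 1 - y < B →
      c / 2 * (1 - y) ^ (-qp) ≤ μ y - x ∧ ν y < C * (1 - y) ^ (-rp) := by
    intro y hy1 hyB
    have hby : 0 < 1 - y := by linarith
    have hyb₁ : y ∈ Set.Ioo b₁ 1 := by
      constructor
      · have : 1 - y < 1 - b₁ := hyB.trans_le (le_trans (min_le_left _ _) (min_le_left _ _))
        linarith
      · exact hy1
    have hyb₂ : y ∈ Set.Ioo b₂ 1 := by
      constructor
      · have : 1 - y < 1 - b₂ := hyB.trans_le (le_trans (min_le_left _ _) (min_le_right _ _))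
        linarith
      · exact hy1
    obtain ⟨hμgt, _, _⟩ := hμ1' y hyb₁
    have hxb := hxbound qp tp (1 - y) hqp rfl hby
      (le_of_lt (hyB.trans_le (le_trans (min_le_right _ _) (min_le_right _ _))))
    refine ⟨?_, (hν1' y hyb₂).2⟩
    have hax : x ≤ |x| := le_abs_self x
    have hcy : c * (1 - y) ^ (-qp) = 2 * (c / 2 * (1 - y) ^ (-qp)) := by ring
    linarith
  -- middle bound for ν
  have hAB : A ≤ 1 - B := by linarith
  have hsub : Set.Icc A (1 - B) ⊆ Set.Ioo 0 1 := fun y hy =>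
    ⟨lt_of_lt_of_le hA hy.1, lt_of_le_of_lt hy.2 (by linarith)⟩
  obtain ⟨M, hM⟩ := (isCompact_Icc : IsCompact (Set.Icc A (1 - B))).exists_bound_of_continuousOn
    (hνcont.mono hsub)
  have hM0 : 0 ≤ M := le_trans (norm_nonneg _) (hM A ⟨le_refl A, hAB⟩)
  -- exponents
  set sm : ℝ := max (rm - 2 * qm) (1/2) with hsm_def
  set sp : ℝ := max (rp - 2 * qp) (1/2) with hsp_def
  have hsm0 : 0 < sm := lt_of_lt_of_le (by norm_num) (le_max_right _ _)
  have hsp0 : 0 < sp := lt_of_lt_of_le (by norm_num) (le_max_right _ _)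
  have hsm1 : sm < 1 := max_lt (by linarith) (by norm_num)
  have hsp1 : sp < 1 := max_lt (by linarith) (by norm_num)
  set K1 : ℝ := 8 * C / c ^ 2 with hK1_def
  have hK1 : 0 < K1 := by positivity
  set Ktot : ℝ := 2 * M / η ^ 2 + 2 * K1 / (1 - sm) + 2 * K1 / (1 - sp) with hKtot_def
  have hKtot0 : 0 ≤ Ktot := by
    rw [hKtot_def]
    have h1 : (0:ℝ) ≤ 2 * M / η ^ 2 := by positivity
    have h2 : (0:ℝ) ≤ 2 * K1 / (1 - sm) := by
      apply div_nonneg (by positivity); linarith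
    have h3 : (0:ℝ) ≤ 2 * K1 / (1 - sp) := by
      apply div_nonneg (by positivity); linarith
    linarith
  obtain ⟨n₀, hn₀⟩ := Filter.eventually_atTop.mp (hεN.eventually (gt_mem_nhds (lt_add_one m)))
  refine ⟨(m + 1) * Ktot, n₀, fun n hn => ?_⟩
  set Nr : ℝ := (Nn n : ℝ) with hNr_def
  have hεn' := hεpos n
  have hδn' := hδpos n
  have hNr : 0 < Nr := by rw [hNr_def]; exact_mod_cast hNpos n
  have hyk : ∀ k ∈ Finset.Icc 1 (Nn n),
      0 < ((k:ℝ) - 1/2) / Nr ∧ ((k:ℝ) - 1/2) / Nr < 1 := by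
    intro k hk
    obtain ⟨hk1, hk2⟩ := Finset.mem_Icc.mp hk
    have hk1' : (1:ℝ) ≤ (k:ℝ) := by exact_mod_cast hk1
    have hk2' : (k:ℝ) ≤ Nr := by rw [hNr_def]; exact_mod_cast hk2
    constructor
    · apply div_pos (by linarith) hNr
    · rw [div_lt_one hNr]; linarith
  -- per-term estimate
  have key : ∀ k ∈ (Finset.Icc 1 (Nn n)).filter
      (fun k : ℕ => η ≤ |μ (((k : ℝ) - 1/2) / Nr) - x|),
      2 * ε n * δ n * ν (((k : ℝ) - 1/2) / Nr) /
        ((x - μ (((k : ℝ) - 1/2) / Nr)) ^ 2 + (δ n) ^ 2 * ν (((k : ℝ) - 1/2) / Nr) ^ 2)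
      ≤ ε n * δ n * (2 * M / η ^ 2) + ε n * δ n * K1 * ((((k:ℝ) - 1/2) / Nr) ^ (-sm))
        + ε n * δ n * K1 * ((1 - ((k:ℝ) - 1/2) / Nr) ^ (-sp)) := by
    intro k hk
    obtain ⟨hkI, hkF⟩ := Finset.mem_filter.mp hk
    set y : ℝ := ((k:ℝ) - 1/2) / Nr with hy_def
    obtain ⟨hy0, hy1⟩ := hyk k hkI
    have h1y : 0 < 1 - y := by linarith
    have hε' := hεpos n
    have hδ' := hδpos n
    have hν_pos : 0 < ν y := lt_of_lt_of_le hcU (hνlow y ⟨hy0, hy1⟩)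
    have hεδn : 0 < ε n * δ n := mul_pos (hεpos n) (hδpos n)
    have hD : 0 < (x - μ y) ^ 2 + (δ n) ^ 2 * (ν y) ^ 2 :=
      add_pos_of_nonneg_of_pos (sq_nonneg _) (by positivity)
    have p1 : 0 ≤ ε n * δ n * (2 * M / η ^ 2) := by positivity
    have p2 : 0 ≤ ε n * δ n * K1 * (y ^ (-sm)) := by positivity
    have p3 : 0 ≤ ε n * δ n * K1 * ((1 - y) ^ (-sp)) := by positivity
    by_cases hcase1 : y < A
    · -- left edge
      obtain ⟨hgap, hνub⟩ := hedge0 y hy0 hcase1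
      have hYq : (0:ℝ) < y ^ (-qm) := Real.rpow_pos_of_pos hy0 _
      have hden : (c / 2 * y ^ (-qm)) ^ 2 ≤ (x - μ y) ^ 2 + (δ n) ^ 2 * (ν y) ^ 2 := by
        have h1 : (c / 2 * y ^ (-qm)) ^ 2 ≤ (x - μ y) ^ 2 :=
          pow_le_pow_left₀ (by positivity) hgap 2
        linarith [mul_pos (pow_pos (hδpos n) 2) (pow_pos hν_pos 2)]
      have hnum : 2 * ε n * δ n * ν y ≤ 2 * ε n * δ n * (C * y ^ (-rm)) :=
        mul_le_mul_of_nonneg_left hνub.le (by positivity)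
      have hy2 : (y ^ (-qm)) ^ 2 = y ^ (-(2 * qm)) := by
        rw [← Real.rpow_natCast (y ^ (-qm)) 2, ← Real.rpow_mul hy0.le]
        congr 1
        push_cast
        ring
      have heq : 2 * ε n * δ n * (C * y ^ (-rm)) / (c / 2 * y ^ (-qm)) ^ 2
          = K1 * (ε n * δ n) * (y ^ (-rm) / y ^ (-(2 * qm))) := by
        rw [mul_pow, hy2, hK1_def]
        have hy2' : (0:ℝ) < y ^ (-(2 * qm)) := Real.rpow_pos_of_pos hy0 _
        field_simp
        ring
      have hexp : y ^ (-rm) / y ^ (-(2 * qm)) = y ^ (2 * qm - rm) := by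
        rw [← Real.rpow_sub hy0, show -rm - -(2 * qm) = 2 * qm - rm by ring]
      have hfin : y ^ (2 * qm - rm) ≤ y ^ (-sm) := by
        apply Real.rpow_le_rpow_of_exponent_ge hy0 (by linarith)
        have := le_max_left (rm - 2 * qm) (1/2)
        rw [hsm_def]; linarith [le_max_left (rm - 2 * qm) (1/2)]
      have hchain : 2 * ε n * δ n * ν y /
          ((x - μ y) ^ 2 + (δ n) ^ 2 * (ν y) ^ 2)
          ≤ K1 * (ε n * δ n) * (y ^ (-sm)) := by
        calc 2 * ε n * δ n * ν y / ((x - μ y) ^ 2 + (δ n) ^ 2 * (ν y) ^ 2)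
            ≤ 2 * ε n * δ n * (C * y ^ (-rm)) / (c / 2 * y ^ (-qm)) ^ 2 :=
              div_le_div₀ (by positivity) hnum (pow_pos (by positivity) 2) hden
          _ = K1 * (ε n * δ n) * (y ^ (2 * qm - rm)) := by rw [heq, hexp]
          _ ≤ K1 * (ε n * δ n) * (y ^ (-sm)) := by
              apply mul_le_mul_of_nonneg_left hfin (by positivity)
      have : K1 * (ε n * δ n) * (y ^ (-sm)) = ε n * δ n * K1 * (y ^ (-sm)) := by ring
      rw [this] at hchain
      linarith
    · by_cases hcase2 : 1 - y < B
      · -- right edge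
        obtain ⟨hgap, hνub⟩ := hedge1 y hy1 hcase2
        have hYq : (0:ℝ) < (1 - y) ^ (-qp) := Real.rpow_pos_of_pos h1y _
        have hden : (c / 2 * (1 - y) ^ (-qp)) ^ 2
            ≤ (x - μ y) ^ 2 + (δ n) ^ 2 * (ν y) ^ 2 := by
          have h0 : (x - μ y) ^ 2 = (μ y - x) ^ 2 := by ring
          have h1 : (c / 2 * (1 - y) ^ (-qp)) ^ 2 ≤ (μ y - x) ^ 2 :=
            pow_le_pow_left₀ (by positivity) hgap 2
          linarith [mul_pos (pow_pos (hδpos n) 2) (pow_pos hν_pos 2)]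
        have hnum : 2 * ε n * δ n * ν y ≤ 2 * ε n * δ n * (C * (1 - y) ^ (-rp)) :=
          mul_le_mul_of_nonneg_left hνub.le (by positivity)
        have hy2 : ((1 - y) ^ (-qp)) ^ 2 = (1 - y) ^ (-(2 * qp)) := by
          rw [← Real.rpow_natCast ((1 - y) ^ (-qp)) 2, ← Real.rpow_mul h1y.le]
          congr 1
          push_cast
          ring
        have heq : 2 * ε n * δ n * (C * (1 - y) ^ (-rp)) / (c / 2 * (1 - y) ^ (-qp)) ^ 2
            = K1 * (ε n * δ n) * ((1 - y) ^ (-rp) / (1 - y) ^ (-(2 * qp))) := by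
          rw [mul_pow, hy2, hK1_def]
          have hy2' : (0:ℝ) < (1 - y) ^ (-(2 * qp)) := Real.rpow_pos_of_pos h1y _
          field_simp
          ring
        have hexp : (1 - y) ^ (-rp) / (1 - y) ^ (-(2 * qp)) = (1 - y) ^ (2 * qp - rp) := by
          rw [← Real.rpow_sub h1y, show -rp - -(2 * qp) = 2 * qp - rp by ring]
        have h1yle : 1 - y ≤ 1 := by linarith
        have hfin : (1 - y) ^ (2 * qp - rp) ≤ (1 - y) ^ (-sp) := by
          apply Real.rpow_le_rpow_of_exponent_ge h1y h1yle
          rw [hsp_def]; linarith [le_max_left (rp - 2 * qp) (1/2)]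
        have hchain : 2 * ε n * δ n * ν y /
            ((x - μ y) ^ 2 + (δ n) ^ 2 * (ν y) ^ 2)
            ≤ K1 * (ε n * δ n) * ((1 - y) ^ (-sp)) := by
          calc 2 * ε n * δ n * ν y / ((x - μ y) ^ 2 + (δ n) ^ 2 * (ν y) ^ 2)
              ≤ 2 * ε n * δ n * (C * (1 - y) ^ (-rp)) / (c / 2 * (1 - y) ^ (-qp)) ^ 2 :=
                div_le_div₀ (by positivity) hnum (pow_pos (by positivity) 2) hden
            _ = K1 * (ε n * δ n) * ((1 - y) ^ (2 * qp - rp)) := by rw [heq, hexp]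
            _ ≤ K1 * (ε n * δ n) * ((1 - y) ^ (-sp)) := by
                apply mul_le_mul_of_nonneg_left hfin (by positivity)
        have : K1 * (ε n * δ n) * ((1 - y) ^ (-sp))
            = ε n * δ n * K1 * ((1 - y) ^ (-sp)) := by ring
        rw [this] at hchain
        linarith
      · -- middle
        have hyIcc : y ∈ Set.Icc A (1 - B) := ⟨not_lt.mp hcase1, by
          have := not_lt.mp hcase2; linarith⟩
        have hνM : ν y ≤ M := le_trans (le_abs_self _) (hM y hyIcc)
        have hden : η ^ 2 ≤ (x - μ y) ^ 2 + (δ n) ^ 2 * (ν y) ^ 2 := by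
          have h0 : (x - μ y) ^ 2 = |μ y - x| ^ 2 := by rw [sq_abs]; ring
          have h1 : η ^ 2 ≤ |μ y - x| ^ 2 := pow_le_pow_left₀ hη.le hkF 2
          linarith [mul_pos (pow_pos (hδpos n) 2) (pow_pos hν_pos 2)]
        have hnum : 2 * ε n * δ n * ν y ≤ 2 * ε n * δ n * M :=
          mul_le_mul_of_nonneg_left hνM (by positivity)
        have hchain : 2 * ε n * δ n * ν y /
            ((x - μ y) ^ 2 + (δ n) ^ 2 * (ν y) ^ 2)
            ≤ 2 * ε n * δ n * M / η ^ 2 :=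
          div_le_div₀ (by positivity) hnum (by positivity) hden
        have heq : 2 * ε n * δ n * M / η ^ 2 = ε n * δ n * (2 * M / η ^ 2) := by ring
        rw [heq] at hchain
        linarith
  -- reflection identity
  have hrefl : ∑ k ∈ Finset.Icc 1 (Nn n), ((1 - ((k:ℝ) - 1/2) / Nr) ^ (-sp))
      = ∑ k ∈ Finset.Icc 1 (Nn n), ((((k:ℝ) - 1/2) / Nr) ^ (-sp)) := by
    apply Finset.sum_nbij' (i := fun k => Nn n + 1 - k) (j := fun k => Nn n + 1 - k)
    · intro a ha; obtain ⟨h1, h2⟩ := Finset.mem_Icc.mp ha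
      exact Finset.mem_Icc.mpr ⟨by omega, by omega⟩
    · intro a ha; obtain ⟨h1, h2⟩ := Finset.mem_Icc.mp ha
      exact Finset.mem_Icc.mpr ⟨by omega, by omega⟩
    · intro a ha; obtain ⟨h1, h2⟩ := Finset.mem_Icc.mp ha; omega
    · intro a ha; obtain ⟨h1, h2⟩ := Finset.mem_Icc.mp ha; omega
    · intro a ha; obtain ⟨h1, h2⟩ := Finset.mem_Icc.mp ha
      congr 1
      have hcast : ((Nn n + 1 - a : ℕ) : ℝ) = Nr + 1 - (a:ℝ) := by
        rw [hNr_def]; push_cast [Nat.cast_sub (by omega : a ≤ Nn n + 1)]; ring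
      rw [hcast]
      field_simp
      ring
  -- summing up
  have hsum1 : ∑ k ∈ Finset.Icc 1 (Nn n), ((((k:ℝ) - 1/2) / Nr) ^ (-sm))
      ≤ 2 * Nr / (1 - sm) := aux_sum_yk hsm0 hsm1 (Nn n) (hNpos n)
  have hsum2 : ∑ k ∈ Finset.Icc 1 (Nn n), ((1 - ((k:ℝ) - 1/2) / Nr) ^ (-sp))
      ≤ 2 * Nr / (1 - sp) := by
    rw [hrefl]; exact aux_sum_yk hsp0 hsp1 (Nn n) (hNpos n)
  have hcard : ((Finset.Icc 1 (Nn n)).card : ℝ) = Nr := by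
    rw [Nat.card_Icc, hNr_def]; push_cast [Nat.add_sub_cancel]; ring
  calc ∑ k ∈ (Finset.Icc 1 (Nn n)).filter
          (fun k : ℕ => η ≤ |μ (((k : ℝ) - 1/2) / Nr) - x|),
        2 * ε n * δ n * ν (((k : ℝ) - 1/2) / Nr) /
          ((x - μ (((k : ℝ) - 1/2) / Nr)) ^ 2 + (δ n) ^ 2 * ν (((k : ℝ) - 1/2) / Nr) ^ 2)
      ≤ ∑ k ∈ (Finset.Icc 1 (Nn n)).filter
          (fun k : ℕ => η ≤ |μ (((k : ℝ) - 1/2) / Nr) - x|),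
        (ε n * δ n * (2 * M / η ^ 2) + ε n * δ n * K1 * ((((k:ℝ) - 1/2) / Nr) ^ (-sm))
          + ε n * δ n * K1 * ((1 - ((k:ℝ) - 1/2) / Nr) ^ (-sp))) :=
        Finset.sum_le_sum key
    _ ≤ ∑ k ∈ Finset.Icc 1 (Nn n),
        (ε n * δ n * (2 * M / η ^ 2) + ε n * δ n * K1 * ((((k:ℝ) - 1/2) / Nr) ^ (-sm))
          + ε n * δ n * K1 * ((1 - ((k:ℝ) - 1/2) / Nr) ^ (-sp))) := by
        apply Finset.sum_le_sum_of_subset_of_nonneg (Finset.filter_subset _ _)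
        intro k hkmem _
        have hε' := hεpos n
        have hδ' := hδpos n
        obtain ⟨hy0, hy1⟩ := hyk k hkmem
        have h1y : 0 < 1 - ((k:ℝ) - 1/2) / Nr := by linarith
        have q1 : 0 ≤ ε n * δ n * (2 * M / η ^ 2) := by positivity
        have q2 : 0 ≤ ε n * δ n * K1 * ((((k:ℝ) - 1/2) / Nr) ^ (-sm)) := by positivity
        have q3 : 0 ≤ ε n * δ n * K1 * ((1 - ((k:ℝ) - 1/2) / Nr) ^ (-sp)) := by positivity
        linarith
    _ = Nr * (ε n * δ n * (2 * M / η ^ 2))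
        + ε n * δ n * K1 * (∑ k ∈ Finset.Icc 1 (Nn n), ((((k:ℝ) - 1/2) / Nr) ^ (-sm)))
        + ε n * δ n * K1 * (∑ k ∈ Finset.Icc 1 (Nn n), ((1 - ((k:ℝ) - 1/2) / Nr) ^ (-sp))) := by
        rw [Finset.sum_add_distrib, Finset.sum_add_distrib, Finset.sum_const,
          ← Finset.mul_sum, ← Finset.mul_sum, nsmul_eq_mul, hcard]
    _ ≤ Nr * (ε n * δ n * (2 * M / η ^ 2))
        + ε n * δ n * K1 * (2 * Nr / (1 - sm))
        + ε n * δ n * K1 * (2 * Nr / (1 - sp)) := by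
        have e2 := mul_le_mul_of_nonneg_left hsum1 (by positivity : (0:ℝ) ≤ ε n * δ n * K1)
        have e3 := mul_le_mul_of_nonneg_left hsum2 (by positivity : (0:ℝ) ≤ ε n * δ n * K1)
        linarith
    _ = (ε n * Nr) * δ n * Ktot := by rw [hKtot_def]; field_simp
    _ ≤ (m + 1) * Ktot * δ n := by
        have hεNn : ε n * Nr < m + 1 := hn₀ n hn
        have h := mul_le_mul_of_nonneg_right hεNn.le (mul_nonneg (hδpos n).le hKtot0)
        nlinarith [h]
end

section
/- (Approximate delta function.) Let x ∈ ℝ, η > 0, and c₁, c₂ > 0. Let f : [x−η, x+η] → ℝ be a continuous function with f(z) ≥ c₁ for all z, differentiable with |f′(z)| ≤ c₂ for all z. For δ > 0 define D_δ(z; x) := (1/π)·δ f(z)/((z−x)² + δ² f(z)²). Then for every bounded Lipschitz continuous function g : [x−η, x+η] → ℝ there exist constants C > 0 and δ₀ ∈ (0,1) (depending only on η, c₁, c₂, the supremum of f, the supremum of |g|, and the Lipschitz constant of g) such that for all 0 < δ < δ₀, |∫_{x−η}^{x+η} D_δ(z; x) g(z) dz − g(x)| ≤ C·δ·ln(1/δ).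 -/
open Real MeasureTheory intervalIntegral
set_option maxHeartbeats 1000000

private lemma my_arctan_le_self {s : ℝ} (hs : 0 ≤ s) : Real.arctan s ≤ s := by
  have h := Convex.norm_image_sub_le_of_norm_hasDerivWithin_le
    (f := Real.arctan) (f' := fun t => 1/(1+t^2)) (C := 1) (s := Set.univ)
    (fun t _ => (Real.hasDerivAt_arctan t).hasDerivWithinAt)
    (fun t _ => by
      rw [Real.norm_eq_abs, abs_of_nonneg (by positivity)]
      rw [div_le_one (by positivity)]; nlinarith [sq_nonneg t])
    convex_univ (Set.mem_univ 0) (Set.mem_univ s)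
  simp only [Real.arctan_zero, sub_zero, Real.norm_eq_abs, one_mul] at h
  calc Real.arctan s ≤ |Real.arctan s| := le_abs_self _
    _ ≤ |s| := h
    _ = s := abs_of_nonneg hs

private lemma my_int_atan (x k a b : ℝ) (hk : 0 < k) :
    ∫ z in a..b, 1/((z-x)^2 + k^2)
      = (1/k)*(Real.arctan ((b-x)/k) - Real.arctan ((a-x)/k)) := by
  have hd : ∀ z ∈ Set.uIcc a b, HasDerivAt (fun z => (1/k) * Real.arctan ((z - x)/k))
      (1/((z-x)^2 + k^2)) z := by
    intro z _
    have h1 : HasDerivAt (fun z : ℝ => (z - x)/k) (1/k) z := by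
      simpa using (((hasDerivAt_id z).sub_const x).div_const k)
    have h2 := (Real.hasDerivAt_arctan ((z - x)/k)).comp z h1
    have h3 := h2.const_mul (1/k)
    refine HasDerivAt.congr_deriv h3 ?_
    field_simp
    ring
  have hint : IntervalIntegrable (fun z => 1/((z-x)^2 + k^2)) volume a b := by
    apply Continuous.intervalIntegrable
    exact continuous_const.div (by continuity) (fun z => by positivity)
  rw [integral_eq_sub_of_hasDerivAt hd hint]
  ring

private lemma my_int_log (x k a b : ℝ) (hk : 0 < k) :
    ∫ z in a..b, (z-x)/((z-x)^2 + k^2)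
      = (1/2)*(Real.log ((b-x)^2 + k^2) - Real.log ((a-x)^2 + k^2)) := by
  have hd : ∀ z ∈ Set.uIcc a b, HasDerivAt (fun z => (1/2) * Real.log ((z - x)^2 + k^2))
      ((z-x)/((z-x)^2 + k^2)) z := by
    intro z _
    have h1 : HasDerivAt (fun z : ℝ => (z - x)^2 + k^2) (2*(z-x)) z := by
      simpa using (((hasDerivAt_id z).sub_const x).pow 2).add_const (k^2)
    have h2 := (Real.hasDerivAt_log (by positivity : ((z:ℝ)-x)^2 + k^2 ≠ 0)).comp z h1
    have h3 := h2.const_mul (1/2)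
    refine HasDerivAt.congr_deriv h3 ?_
    field_simp
    try ring
  have hint : IntervalIntegrable (fun z => (z-x)/((z-x)^2 + k^2)) volume a b := by
    apply Continuous.intervalIntegrable
    exact (by continuity : Continuous fun z : ℝ => z - x).div (by continuity)
      (fun z => by positivity)
  rw [integral_eq_sub_of_hasDerivAt hd hint]
  ring

private lemma my_int_absJ (x k η : ℝ) (hη : 0 < η) (hk : 0 < k) :
    ∫ z in (x-η)..(x+η), |z-x|/((z-x)^2 + k^2)
      = Real.log (η^2 + k^2) - Real.log (k^2) := by
  have hcont : Continuous fun z : ℝ => |z-x|/((z-x)^2 + k^2) :=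
    (by continuity : Continuous fun z : ℝ => |z - x|).div (by continuity)
      (fun z => by positivity)
  have h1 : IntervalIntegrable (fun z : ℝ => |z-x|/((z-x)^2 + k^2)) volume (x-η) x :=
    hcont.intervalIntegrable _ _
  have h2 : IntervalIntegrable (fun z : ℝ => |z-x|/((z-x)^2 + k^2)) volume x (x+η) :=
    hcont.intervalIntegrable _ _
  rw [← integral_add_adjacent_intervals h1 h2]
  have e1 : (∫ z in (x-η)..x, |z-x|/((z-x)^2 + k^2))
      = ∫ z in (x-η)..x, -((z-x)/((z-x)^2 + k^2)) := by
    apply integral_congr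
    intro z hz
    rw [Set.uIcc_of_le (by linarith)] at hz
    obtain ⟨hz1, hz2⟩ := hz
    dsimp only
    rw [abs_of_nonpos (by linarith)]
    ring
  have e2 : (∫ z in x..(x+η), |z-x|/((z-x)^2 + k^2))
      = ∫ z in x..(x+η), (z-x)/((z-x)^2 + k^2) := by
    apply integral_congr
    intro z hz
    rw [Set.uIcc_of_le (by linarith)] at hz
    obtain ⟨hz1, hz2⟩ := hz
    dsimp only
    rw [abs_of_nonneg (by linarith)]
  rw [e1, e2, intervalIntegral.integral_neg, my_int_log x k _ _ hk, my_int_log x k _ _ hk]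
  have : x - η - x = -η := by ring
  rw [this]
  have : x + η - x = η := by ring
  rw [this]
  have : x - x = 0 := by ring
  rw [this]
  have : (-η)^2 = η^2 := by ring
  rw [this]
  norm_num
  ring

theorem stmt6 (x η c₁ c₂ : ℝ) (hη : 0 < η) (hc₁ : 0 < c₁) (hc₂ : 0 < c₂)
    (f f' : ℝ → ℝ)
    (hfc : ContinuousOn f (Set.Icc (x - η) (x + η)))
    (hflow : ∀ z ∈ Set.Icc (x - η) (x + η), c₁ ≤ f z)
    (hfd : ∀ z ∈ Set.Icc (x - η) (x + η),
      HasDerivWithinAt f (f' z) (Set.Icc (x - η) (x + η)) z)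
    (hf' : ∀ z ∈ Set.Icc (x - η) (x + η), |f' z| ≤ c₂)
    (g : ℝ → ℝ) (Lg : NNReal) (hg : LipschitzOnWith Lg g (Set.Icc (x - η) (x + η)))
    (hgbdd : ∃ Mg : ℝ, ∀ z ∈ Set.Icc (x - η) (x + η), |g z| ≤ Mg) :
    ∃ Cst > 0, ∃ δ₀ ∈ Set.Ioo (0:ℝ) 1, ∀ δ : ℝ, 0 < δ → δ < δ₀ →
      |(∫ z in (x - η)..(x + η),
          (1 / Real.pi) * (δ * f z / ((z - x) ^ 2 + δ ^ 2 * f z ^ 2)) * g z) - g x|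
        ≤ Cst * δ * Real.log (1 / δ) := by
  obtain ⟨Mg, hMg⟩ := hgbdd
  have hxS : x ∈ Set.Icc (x - η) (x + η) := ⟨by linarith, by linarith⟩
  have hMg0 : 0 ≤ Mg := le_trans (abs_nonneg _) (hMg x hxS)
  obtain ⟨Mf0, hMf0⟩ := (isCompact_Icc).exists_bound_of_continuousOn hfc
  set Mf := max Mf0 c₁ with hMfdef
  have hMfc : c₁ ≤ Mf := le_max_right _ _
  have hMfpos : 0 < Mf := lt_of_lt_of_le hc₁ hMfc
  have hfub : ∀ z ∈ Set.Icc (x - η) (x + η), f z ≤ Mf := by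
    intro z hz
    calc f z ≤ |f z| := le_abs_self _
      _ ≤ Mf0 := by simpa using hMf0 z hz
      _ ≤ Mf := le_max_left _ _
  have hfL : ∀ z ∈ Set.Icc (x - η) (x + η), |f z - f x| ≤ c₂ * |z - x| := by
    intro z hz
    have := Convex.norm_image_sub_le_of_norm_hasDerivWithin_le hfd
      (fun t ht => by simpa [Real.norm_eq_abs] using hf' t ht) (convex_Icc _ _) hxS hz
    simpa [Real.norm_eq_abs] using this
  set a := f x with ha
  have ha1 : c₁ ≤ a := hflow x hxS
  have ha2 : a ≤ Mf := hfub x hxS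
  have ha0 : 0 < a := lt_of_lt_of_le hc₁ ha1
  have hπ : (0:ℝ) < Real.pi := Real.pi_pos
  have hlog2 : 0 < Real.log 2 := Real.log_pos (by norm_num)
  set K := |Real.log (η^2 + c₁^2)| + 2*|Real.log c₁| with hKdef
  have hK0 : 0 ≤ K := by positivity
  set B := (Mg*c₂ + (Lg:ℝ)*Mf)/Real.pi with hBdef
  have hLg0 : (0:ℝ) ≤ (Lg:ℝ) := Lg.coe_nonneg
  have hB0 : 0 ≤ B := by positivity
  set Cst := B * (K/Real.log 2 + 2) + (2*Mg*Mf/(Real.pi*η))/Real.log 2 + 1 with hCdef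
  have hCpos : 0 < Cst := by
    have h1 : 0 ≤ B * (K/Real.log 2 + 2) := by positivity
    have h2 : 0 ≤ (2*Mg*Mf/(Real.pi*η))/Real.log 2 := by positivity
    rw [hCdef]; linarith
  refine ⟨Cst, hCpos, 1/2, ⟨by norm_num, by norm_num⟩, ?_⟩
  intro δ hδ0 hδhalf
  have hδ1 : δ < 1 := by linarith
  set k1 := δ * c₁ with hk1def
  have hk1 : 0 < k1 := by positivity
  set L : ℝ → ℝ := fun z => ((δ*a)/Real.pi) * (1/((z - x)^2 + (δ*a)^2)) with hLdef
  have hka : 0 < δ * a := by positivity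
  have huIcc : Set.uIcc (x-η) (x+η) = Set.Icc (x-η) (x+η) := Set.uIcc_of_le (by linarith)
  have hden : ∀ z ∈ Set.Icc (x-η) (x+η), 0 < (z - x)^2 + δ^2 * f z^2 := by
    intro z hz
    have h := hflow z hz
    have hfz : 0 < f z := lt_of_lt_of_le hc₁ h
    have h3 : 0 < δ^2 * f z ^ 2 := by positivity
    linarith [sq_nonneg (z - x)]
  have hDc : ContinuousOn
      (fun z => (1 / Real.pi) * (δ * f z / ((z - x)^2 + δ^2 * f z^2)) * g z)
      (Set.Icc (x-η) (x+η)) := by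
    have hcont1 : ContinuousOn (fun z : ℝ => (z - x)^2 + δ^2 * f z^2)
        (Set.Icc (x-η) (x+η)) :=
      (((continuous_id.sub continuous_const).pow 2).continuousOn).add
        (continuousOn_const.mul (hfc.pow 2))
    exact (continuousOn_const.mul ((continuousOn_const.mul hfc).div hcont1
      (fun z hz => ne_of_gt (hden z hz)))).mul hg.continuousOn
  have hIDg : IntervalIntegrable
      (fun z => (1 / Real.pi) * (δ * f z / ((z - x)^2 + δ^2 * f z^2)) * g z)
      volume (x-η) (x+η) :=
    ContinuousOn.intervalIntegrable (by rw [huIcc]; exact hDc)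
  have hLcont : Continuous L := by
    rw [hLdef]
    refine continuous_const.mul (continuous_const.div ?_ (fun z => by positivity))
    exact ((continuous_id.sub continuous_const).pow 2).add continuous_const
  have hILg : IntervalIntegrable (fun z => L z * g x) volume (x-η) (x+η) :=
    (hLcont.mul continuous_const).intervalIntegrable _ _
  have hIntL : ∫ z in (x-η)..(x+η), L z = (2/Real.pi) * Real.arctan (η/(δ*a)) := by
    rw [hLdef]
    rw [intervalIntegral.integral_const_mul]
    rw [my_int_atan x (δ*a) (x-η) (x+η) hka]
    rw [show x + η - x = η by ring, show x - η - x = -η by ring]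
    rw [show -η/(δ*a) = -(η/(δ*a)) by ring, Real.arctan_neg]
    field_simp
    ring
  have hptw : ∀ z ∈ Set.Icc (x-η) (x+η),
      |(1 / Real.pi) * (δ * f z / ((z - x)^2 + δ^2 * f z^2)) * g z - L z * g x|
        ≤ (B*δ) * (|z - x| / ((z - x)^2 + k1^2)) := by
    intro z hz
    simp only [hLdef]
    set u := z - x with hu
    set F := f z with hF
    have hF1 : c₁ ≤ F := hflow z hz
    have hF2 : F ≤ Mf := hfub z hz
    have hF0 : 0 < F := lt_of_lt_of_le hc₁ hF1
    have hFa : |F - a| ≤ c₂ * |u| := hfL z hz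
    have hgz : |g z| ≤ Mg := hMg z hz
    have hgd : |g z - g x| ≤ (Lg:ℝ) * |u| := by
      have := hg.dist_le_mul z hz x hxS
      simpa [Real.dist_eq, hu] using this
    set P := u^2 + δ^2*F^2 with hP
    set Q := u^2 + (δ*a)^2 with hQ
    set R := u^2 + k1^2 with hR
    clear_value u F P Q R
    clear_value a k1 B Mf
    have hPpos : 0 < P := by rw [hP]; positivity
    have hQpos : 0 < Q := by rw [hQ]; positivity
    have hRpos : 0 < R := by rw [hR]; positivity
    have hId : (1 / Real.pi) * (δ * F / P) - ((δ*a)/Real.pi) * (1/Q)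
        = (δ * ((F - a) * (u^2 - δ^2*F*a))) / (Real.pi * (P*Q)) := by
      rw [hP, hQ]
      field_simp
      ring
    have hq0 : 0 ≤ δ^2*F*a := by positivity
    have hW : |u^2 - δ^2*F*a| ≤ u^2 + δ^2*F*a := by
      rw [abs_le]
      constructor
      · linarith [sq_nonneg u]
      · linarith
    have hPQ : (u^2 + δ^2*F*a) * R ≤ P * Q := by
      rcases le_total F a with hc | hc
      · have h1 : u^2 + δ^2*F*a ≤ Q := by
          rw [hQ]
          have hh := mul_le_mul_of_nonneg_left hc (by positivity : (0:ℝ) ≤ δ^2*a)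
          have e2 : (δ*a)^2 = δ^2*a*a := by ring
          have e3 : δ^2*F*a = δ^2*a*F := by ring
          rw [e2, e3]
          linarith [hh]
        have h2 : R ≤ P := by
          rw [hR, hP, hk1def]
          have hh := mul_le_mul_of_nonneg_left
            (mul_le_mul hF1 hF1 hc₁.le hF0.le) (sq_nonneg δ)
          have e2 : (δ*c₁)^2 = δ^2*(c₁*c₁) := by ring
          have e3 : δ^2*F^2 = δ^2*(F*F) := by ring
          rw [e2, e3]
          linarith [hh]
        calc (u^2 + δ^2*F*a) * R ≤ Q * P :=
              mul_le_mul h1 h2 hRpos.le hQpos.le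
          _ = P * Q := mul_comm _ _
      · have h1 : u^2 + δ^2*F*a ≤ P := by
          rw [hP]
          have hh := mul_le_mul_of_nonneg_left hc (by positivity : (0:ℝ) ≤ δ^2*F)
          have e2 : δ^2*F^2 = δ^2*F*F := by ring
          rw [e2]
          linarith [hh]
        have h2 : R ≤ Q := by
          rw [hR, hQ, hk1def]
          have hh := mul_le_mul_of_nonneg_left
            (mul_le_mul ha1 ha1 hc₁.le ha0.le) (sq_nonneg δ)
          have e2 : (δ*c₁)^2 = δ^2*(c₁*c₁) := by ring
          have e3 : (δ*a)^2 = δ^2*(a*a) := by ring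
          rw [e2, e3]
          linarith [hh]
        exact mul_le_mul h1 h2 hRpos.le hPpos.le
    have hDL : |(1 / Real.pi) * (δ * F / P) - ((δ*a)/Real.pi) * (1/Q)|
        ≤ (c₂ * (δ * |u|)) / (Real.pi * R) := by
      rw [hId, abs_div, abs_of_pos (by positivity : (0:ℝ) < Real.pi * (P*Q)), abs_mul,
        abs_of_pos hδ0, abs_mul]
      rw [div_le_div_iff₀ (by positivity) (by positivity)]
      have step1 : δ * (|F - a| * |u^2 - δ^2*F*a|) * (Real.pi * R)
          ≤ δ * ((c₂*|u|) * (u^2 + δ^2*F*a)) * (Real.pi * R) := by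
        apply mul_le_mul_of_nonneg_right _ (by positivity)
        apply mul_le_mul_of_nonneg_left _ hδ0.le
        exact mul_le_mul hFa hW (abs_nonneg _) (by positivity)
      have step2 := mul_le_mul_of_nonneg_left hPQ
        (by positivity : (0:ℝ) ≤ δ * (c₂*|u|) * Real.pi)
      calc δ * (|F - a| * |u^2 - δ^2*F*a|) * (Real.pi * R)
          ≤ δ * ((c₂*|u|) * (u^2 + δ^2*F*a)) * (Real.pi * R) := step1
        _ = (δ * (c₂*|u|) * Real.pi) * ((u^2 + δ^2*F*a) * R) := by ring
        _ ≤ (δ * (c₂*|u|) * Real.pi) * (P * Q) := step2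
        _ = c₂ * (δ * |u|) * (Real.pi * (P*Q)) := by ring
    have hRQ : R ≤ Q := by
      rw [hR, hQ, hk1def]
      have hh := mul_le_mul_of_nonneg_left
        (mul_le_mul ha1 ha1 hc₁.le ha0.le) (sq_nonneg δ)
      have e2 : (δ*c₁)^2 = δ^2*(c₁*c₁) := by ring
      have e3 : (δ*a)^2 = δ^2*(a*a) := by ring
      rw [e2, e3]
      linarith [hh]
    have hLb : ((δ*a)/Real.pi) * (1/Q) * ((Lg:ℝ) * |u|)
        ≤ ((Lg:ℝ) * Mf * (δ * |u|)) / (Real.pi * R) := by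
      have e : ((δ*a)/Real.pi) * (1/Q) * ((Lg:ℝ) * |u|)
          = (δ*a*((Lg:ℝ)*|u|))/(Real.pi*Q) := by
        field_simp
      rw [e, div_le_div_iff₀ (by positivity) (by positivity)]
      have haR : a * R ≤ Mf * Q := mul_le_mul ha2 hRQ hRpos.le hMfpos.le
      have step := mul_le_mul_of_nonneg_left haR
        (by positivity : (0:ℝ) ≤ δ * ((Lg:ℝ)*|u|) * Real.pi)
      calc δ*a*((Lg:ℝ)*|u|)*(Real.pi*R) = (δ * ((Lg:ℝ)*|u|) * Real.pi) * (a*R) := by ring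
        _ ≤ (δ * ((Lg:ℝ)*|u|) * Real.pi) * (Mf*Q) := step
        _ = (Lg:ℝ)*Mf*(δ*|u|)*(Real.pi*Q) := by ring
    have hLpos : 0 < ((δ*a)/Real.pi) * (1/Q) := by positivity
    calc |(1/Real.pi)*(δ*F/P)*g z - ((δ*a)/Real.pi)*(1/Q)*g x|
        = |((1/Real.pi)*(δ*F/P) - ((δ*a)/Real.pi)*(1/Q))*g z
            + ((δ*a)/Real.pi)*(1/Q)*(g z - g x)| := by ring_nf
      _ ≤ |((1/Real.pi)*(δ*F/P) - ((δ*a)/Real.pi)*(1/Q))| * |g z|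
            + ((δ*a)/Real.pi)*(1/Q)*|g z - g x| := by
          refine (abs_add_le _ _).trans ?_
          rw [abs_mul, abs_mul, abs_of_pos hLpos]
      _ ≤ (c₂*(δ*|u|))/(Real.pi*R) * Mg
            + ((δ*a)/Real.pi)*(1/Q)*((Lg:ℝ)*|u|) := by
          exact add_le_add (mul_le_mul hDL hgz (abs_nonneg _) (by positivity))
            (mul_le_mul_of_nonneg_left hgd hLpos.le)
      _ ≤ (c₂*(δ*|u|))/(Real.pi*R) * Mg + ((Lg:ℝ)*Mf*(δ*|u|))/(Real.pi*R) :=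
          add_le_add_right hLb _
      _ = (B*δ)*(|u|/R) := by
          rw [hBdef]
          field_simp
  have hIbound : IntervalIntegrable
      (fun z => (B*δ) * (|z - x| / ((z - x)^2 + k1^2))) volume (x-η) (x+η) := by
    apply Continuous.intervalIntegrable
    apply continuous_const.mul
    exact ((continuous_id.sub continuous_const).abs).div
      (((continuous_id.sub continuous_const).pow 2).add continuous_const)
      (fun z => ne_of_gt (add_pos_of_nonneg_of_pos (sq_nonneg _) (pow_pos hk1 2)))
  have hJ : ∫ z in (x-η)..(x+η), (B*δ)*(|z - x|/((z - x)^2 + k1^2))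
      = (B*δ)*(Real.log (η^2 + k1^2) - Real.log (k1^2)) := by
    rw [intervalIntegral.integral_const_mul, my_int_absJ x k1 η hη hk1]
  have hJ0 : 0 ≤ Real.log (η^2 + k1^2) - Real.log (k1^2) := by
    have := Real.log_le_log (by positivity : (0:ℝ) < k1^2)
      (by linarith [sq_nonneg η] : k1^2 ≤ η^2 + k1^2)
    linarith
  have hBδ0 : 0 ≤ B*δ := mul_nonneg hB0 hδ0.le
  have hbound1 : |∫ z in (x-η)..(x+η),
      ((1 / Real.pi) * (δ * f z / ((z - x)^2 + δ^2 * f z^2)) * g z - L z * g x)|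
        ≤ (B*δ)*(Real.log (η^2 + k1^2) - Real.log (k1^2)) := by
    rw [← Real.norm_eq_abs]
    have h := intervalIntegral.norm_integral_le_abs_of_norm_le (μ := volume)
      (f := fun z => (1 / Real.pi) * (δ * f z / ((z - x)^2 + δ^2 * f z^2)) * g z - L z * g x)
      (g := fun z => (B*δ) * (|z - x| / ((z - x)^2 + k1^2)))
      (a := x-η) (b := x+η) ?_ hIbound
    · rw [hJ, abs_of_nonneg (mul_nonneg hBδ0 hJ0)] at h
      exact h
    · filter_upwards [ae_restrict_mem measurableSet_uIoc] with t ht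
      have htS : t ∈ Set.Icc (x-η) (x+η) := by
        rw [Set.uIoc_of_le (by linarith : x-η ≤ x+η)] at ht
        exact Set.Ioc_subset_Icc_self ht
      rw [Real.norm_eq_abs]
      exact hptw t htS
  have hsub := intervalIntegral.integral_sub hIDg hILg
  have hLgx : ∫ z in (x-η)..(x+η), L z * g x
      = ((2/Real.pi)*Real.arctan (η/(δ*a))) * g x := by
    rw [intervalIntegral.integral_mul_const, hIntL]
  set T := Real.arctan (η/(δ*a)) with hT
  have ht0 : 0 < η/(δ*a) := by positivity
  have hT1 : (2/Real.pi)*T ≤ 1 := by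
    have h2 := Real.arctan_lt_pi_div_two (η/(δ*a))
    rw [hT, div_mul_eq_mul_div, div_le_one hπ]
    linarith
  have hCterm : 1 - (2/Real.pi)*T ≤ (2*Mf/(Real.pi*η))*δ := by
    have hinv : Real.arctan ((η/(δ*a))⁻¹) = Real.pi/2 - T := Real.arctan_inv_of_pos ht0
    have hle : Real.arctan ((η/(δ*a))⁻¹) ≤ (η/(δ*a))⁻¹ :=
      my_arctan_le_self (by positivity)
    have hinv2 : (η/(δ*a))⁻¹ = δ*a/η := by rw [inv_div]
    have h1 : 1 - (2/Real.pi)*T = (2/Real.pi)*(Real.pi/2 - T) := by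
      field_simp
    rw [h1, ← hinv]
    calc (2/Real.pi)*Real.arctan ((η/(δ*a))⁻¹) ≤ (2/Real.pi)*(δ*a/η) := by
          rw [← hinv2]
          exact mul_le_mul_of_nonneg_left hle (by positivity)
      _ ≤ (2*Mf/(Real.pi*η))*δ := by
          have e1 : (2/Real.pi)*(δ*a/η) = (2*δ/(Real.pi*η))*a := by
            field_simp
          have e2 : (2*Mf/(Real.pi*η))*δ = (2*δ/(Real.pi*η))*Mf := by ring
          rw [e1, e2]
          exact mul_le_mul_of_nonneg_left ha2 (by positivity)
  have hdecomp : (∫ z in (x - η)..(x + η),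
        (1 / Real.pi) * (δ * f z / ((z - x) ^ 2 + δ ^ 2 * f z ^ 2)) * g z) - g x
      = (∫ z in (x-η)..(x+η),
          ((1 / Real.pi) * (δ * f z / ((z - x)^2 + δ^2 * f z^2)) * g z - L z * g x))
        + g x * ((2/Real.pi)*T - 1) := by
    rw [hsub, hLgx, hT]
    ring
  have habs : |(∫ z in (x - η)..(x + η),
        (1 / Real.pi) * (δ * f z / ((z - x) ^ 2 + δ ^ 2 * f z ^ 2)) * g z) - g x|
      ≤ (B*δ)*(Real.log (η^2 + k1^2) - Real.log (k1^2)) + Mg*((2*Mf/(Real.pi*η))*δ) := by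
    rw [hdecomp]
    refine (abs_add_le _ _).trans (add_le_add hbound1 ?_)
    rw [abs_mul]
    have he : |(2/Real.pi)*T - 1| = 1 - (2/Real.pi)*T := by
      rw [abs_of_nonpos (by linarith)]
      ring
    rw [he]
    exact mul_le_mul (hMg x hxS) hCterm (by linarith) hMg0
  set Λ := Real.log (1/δ) with hΛ
  have hΛval : Λ = -Real.log δ := by rw [hΛ, one_div, Real.log_inv]
  have hΛ2 : Real.log 2 ≤ Λ := by
    rw [hΛ]
    apply Real.log_le_log (by norm_num)
    rw [le_div_iff₀ hδ0]
    linarith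
  have hΛpos : 0 < Λ := lt_of_lt_of_le hlog2 hΛ2
  have hlogle : Real.log (η^2 + k1^2) - Real.log (k1^2) ≤ K + 2*Λ := by
    have hk1c : k1 ≤ c₁ := by
      rw [hk1def]
      calc δ*c₁ ≤ 1*c₁ := mul_le_mul_of_nonneg_right hδ1.le hc₁.le
        _ = c₁ := one_mul c₁
    have l1 : Real.log (η^2 + k1^2) ≤ |Real.log (η^2 + c₁^2)| := by
      have h2 : Real.log (η^2 + k1^2) ≤ Real.log (η^2 + c₁^2) :=
        Real.log_le_log (by positivity)
          (add_le_add_right (pow_le_pow_left₀ hk1.le hk1c 2) (η^2))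
      exact h2.trans (le_abs_self _)
    have l2 : Real.log (k1^2) = 2*(Real.log δ + Real.log c₁) := by
      rw [hk1def, Real.log_pow, Real.log_mul (ne_of_gt hδ0) (ne_of_gt hc₁)]
      push_cast
      ring
    rw [hKdef]
    have l3 := neg_abs_le (Real.log c₁)
    linarith [l1, l2, l3, hΛval.ge, hΛval.le]
  have hKdiv0 : 0 ≤ K/Real.log 2 := div_nonneg hK0 hlog2.le
  have hfinal1 : K + 2*Λ ≤ (K/Real.log 2 + 2)*Λ := by
    have e : K = (K/Real.log 2)*Real.log 2 := by field_simp
    have h2 : (K/Real.log 2)*Real.log 2 ≤ (K/Real.log 2)*Λ :=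
      mul_le_mul_of_nonneg_left hΛ2 hKdiv0
    linarith [e, h2]
  have hδΛ : δ ≤ δ*Λ/Real.log 2 := by
    rw [le_div_iff₀ hlog2]
    exact mul_le_mul_of_nonneg_left hΛ2 hδ0.le
  have hMfη0 : 0 ≤ 2*Mf/(Real.pi*η) := by positivity
  calc |(∫ z in (x - η)..(x + η),
        (1 / Real.pi) * (δ * f z / ((z - x) ^ 2 + δ ^ 2 * f z ^ 2)) * g z) - g x|
      ≤ (B*δ)*(Real.log (η^2 + k1^2) - Real.log (k1^2)) + Mg*((2*Mf/(Real.pi*η))*δ) := habs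
    _ ≤ (B*δ)*((K/Real.log 2 + 2)*Λ) + Mg*((2*Mf/(Real.pi*η))*(δ*Λ/Real.log 2)) := by
        apply add_le_add
        · exact mul_le_mul_of_nonneg_left (hlogle.trans hfinal1) hBδ0
        · exact mul_le_mul_of_nonneg_left
            (mul_le_mul_of_nonneg_left hδΛ hMfη0) hMg0
    _ = (B*(K/Real.log 2 + 2) + (2*Mg*Mf/(Real.pi*η))/Real.log 2) * δ * Λ := by
        field_simp
    _ ≤ Cst * δ * Λ := by
        rw [hCdef]
        have hδΛ0 : (0:ℝ) ≤ δ*Λ := mul_nonneg hδ0.le hΛpos.le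
        linarith [hδΛ0]
end

section
/- (Factorization identity linking the Hermitian and non-Hermitian Benjamin–Ono matrices.) Let N ≥ 1, ε > 0, let λ_1, …, λ_N be distinct negative real numbers, and let γ_1, …, γ_N, x, t ∈ ℝ. Define: the Hermitian matrix A with A_{jk} = 2iε√(λ_jλ_k)/(λ_j − λ_k) for j ≠ k and A_{jj} = −2λ_j(x + 2λ_j t + γ_j); the diagonal matrix D = diag(√(−2λ_1), …, √(−2λ_N)); and the Hermitian matrix B with B_{jk} = −iε/(λ_j − λ_k) for j ≠ k and B_{jj} = −2λ_j t − γ_j. Then 𝕀 + (i/ε)A = (i/ε)·D·(x𝕀 − B − iεD^{-2})·D, where 𝕀 is the N×N identity matrix. -/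
theorem stmt9 (N : ℕ) (hN : 1 ≤ N) (ε : ℝ) (hε : 0 < ε)
    (lam : Fin N → ℝ) (hinj : Function.Injective lam) (hneg : ∀ j, lam j < 0)
    (γ : Fin N → ℝ) (x t : ℝ)
    (A B D : Matrix (Fin N) (Fin N) ℂ)
    (hA : ∀ j k, A j k = if j = k
        then ((-2 * lam j * (x + 2 * lam j * t + γ j) : ℝ) : ℂ)
        else 2 * Complex.I * (ε : ℂ) * ((Real.sqrt (lam j * lam k) : ℝ) : ℂ) /
          ((lam j : ℂ) - (lam k : ℂ)))
    (hD : D = Matrix.diagonal fun j => ((Real.sqrt (-2 * lam j) : ℝ) : ℂ))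
    (hB : ∀ j k, B j k = if j = k then ((-2 * lam j * t - γ j : ℝ) : ℂ)
        else -Complex.I * (ε : ℂ) / ((lam j : ℂ) - (lam k : ℂ))) :
    (1 : Matrix (Fin N) (Fin N) ℂ) + (Complex.I / (ε : ℂ)) • A =
      (Complex.I / (ε : ℂ)) •
        (D * ((x : ℂ) • (1 : Matrix (Fin N) (Fin N) ℂ) - B -
          (Complex.I * (ε : ℂ)) • (D * D)⁻¹) * D) := by
  subst hD
  set d : Fin N → ℂ := fun j => ((Real.sqrt (-2 * lam j) : ℝ) : ℂ) with hd
  have hdsq : ∀ j, d j * d j = ((-2 * lam j : ℝ) : ℂ) := by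
    intro j
    simp only [hd]
    rw [← Complex.ofReal_mul, Real.mul_self_sqrt (by nlinarith [hneg j])]
  have hεC : (ε : ℂ) ≠ 0 := by exact_mod_cast hε.ne'
  have hdne : ∀ j, d j * d j ≠ 0 := by
    intro j; rw [hdsq j]
    simpa using (by nlinarith [hneg j] : (-2 * lam j : ℝ) ≠ 0)
  have hinv : (Matrix.diagonal d * Matrix.diagonal d)⁻¹
      = Matrix.diagonal (fun j => (d j * d j)⁻¹) := by
    rw [Matrix.diagonal_mul_diagonal]
    apply Matrix.inv_eq_right_inv
    rw [Matrix.diagonal_mul_diagonal,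
      show (fun i => (d i * d i) * (d i * d i)⁻¹) = fun _ => (1:ℂ) from
        funext fun i => mul_inv_cancel₀ (hdne i), Matrix.diagonal_one]
  rw [hinv]
  ext j k
  simp only [Matrix.add_apply, Matrix.smul_apply, Matrix.one_apply,
    Matrix.mul_diagonal, Matrix.diagonal_mul, Matrix.sub_apply, Matrix.diagonal_apply,
    smul_eq_mul]
  by_cases hjk : j = k
  · subst hjk
    rw [hA j j, hB j j]
    simp only [if_pos rfl]
    have hdj0 : d j ≠ 0 := (mul_ne_zero_iff.mp (hdne j)).1
    have h1 : d j * d j = -2*((lam j : ℝ):ℂ) := by rw [hdsq j]; push_cast; ring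
    have h2 : (d j) * (d j)⁻¹ = 1 := mul_inv_cancel₀ hdj0
    have h3 : Complex.I^2 = -1 := Complex.I_sq
    have h4 : (ε:ℂ) * (ε:ℂ)⁻¹ = 1 := mul_inv_cancel₀ hεC
    have e1 : (d j * d j) * (d j * d j)⁻¹ = 1 := mul_inv_cancel₀ (hdne j)
    push_cast
    linear_combination (-Complex.I * ((ε:ℂ))⁻¹ * ((x:ℂ) + 2*((lam j : ℝ):ℂ)*(t:ℂ) + ((γ j : ℝ):ℂ))) * h1
      + (((ε:ℂ))⁻¹ * (ε:ℂ) * (d j * d j) * (d j * d j)⁻¹) * h3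
      + (-(d j * d j) * (d j * d j)⁻¹) * h4
      + (-1 : ℂ) * e1
  · rw [hA j k, hB j k]
    have hlk : ((lam j : ℂ) - (lam k : ℂ)) ≠ 0 := by
      rw [sub_ne_zero]
      exact_mod_cast fun h => hjk (hinj h)
    have hdd : d j * d k = 2 * ((Real.sqrt (lam j * lam k) : ℝ) : ℂ) := by
      simp only [hd]
      rw [← Complex.ofReal_mul, ← Real.sqrt_mul (by nlinarith [hneg j]) ]
      have : (-2 * lam j) * (-2 * lam k) = 2^2 * (lam j * lam k) := by ring
      rw [this, Real.sqrt_mul (by positivity), Real.sqrt_sq (by norm_num)]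
      push_cast; ring
    simp only [if_neg hjk]
    field_simp
    linear_combination (-((ε:ℝ):ℂ) * Complex.I ^ 2) * hdd
end

section
/- (Symmetric exponential sum with first-order correction.) For each θ₀ ∈ (0,π) there exist constants C > 0 and K₀ ∈ ℕ such that for all integers K ≥ K₀ and all θ with θ₀ ≤ |θ| ≤ π, |Σ_{n=−K, n≠0}^{K} e^{inθ}/n − i(π·sgn(θ) − θ) + (i/K)·cos((K + 1/2)θ)/sin(θ/2)| ≤ C/K². -/
open Real Set Finset intervalIntegral MeasureTheory
set_option maxHeartbeats 1000000

lemma sum_cos_eq (K : ℕ) (t : ℝ) (hs : Real.sin (t/2) ≠ 0) :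
    ∑ n ∈ Finset.Icc 1 K, Real.cos (n * t)
      = Real.sin (((K:ℝ) + 1/2) * t) / (2 * Real.sin (t/2)) - 1/2 := by
  have key : ∀ K : ℕ, 2 * Real.sin (t/2) * ∑ n ∈ Finset.Icc 1 K, Real.cos (n * t)
      = Real.sin (((K:ℝ) + 1/2) * t) - Real.sin (t/2) := by
    intro K
    induction K with
    | zero => norm_num [show ((1:ℝ)/2) * t = t/2 by ring]
    | succ K ih =>
      rw [Finset.sum_Icc_succ_top (by omega)]
      have h := Real.sin_sub_sin (((K:ℝ)+1+1/2) * t) (((K:ℝ)+1/2) * t)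
      have e1 : ((((K:ℝ)+1+1/2) * t - ((K:ℝ)+1/2) * t) / 2) = t/2 := by ring
      have e2 : ((((K:ℝ)+1+1/2) * t + ((K:ℝ)+1/2) * t) / 2) = ((K:ℝ)+1) * t := by ring
      rw [e1, e2] at h
      push_cast
      rw [mul_add]
      linarith
  have h := key K
  set A := Real.sin (((K:ℝ) + 1/2) * t) with hA
  set s := Real.sin (t/2) with hsdef
  field_simp
  linarith

noncomputable def gg (t : ℝ) : ℝ := (2 * Real.sin (t/2))⁻¹
noncomputable def gg1 (t : ℝ) : ℝ := -(Real.cos (t/2) / (4 * Real.sin (t/2)^2))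
noncomputable def gg2 (t : ℝ) : ℝ := (1 + Real.cos (t/2)^2) / (8 * Real.sin (t/2)^3)

lemma hd_half (t : ℝ) : HasDerivAt (fun t : ℝ => t/2) (1/2) t := by
  simpa using (hasDerivAt_id t).div_const 2

lemma hd_sin_half (t : ℝ) : HasDerivAt (fun t : ℝ => Real.sin (t/2)) (Real.cos (t/2) * (1/2)) t :=
  (hd_half t).sin

lemma hd_cos_half (t : ℝ) : HasDerivAt (fun t : ℝ => Real.cos (t/2)) (-Real.sin (t/2) * (1/2)) t :=
  (hd_half t).cos

lemma hd_gg (t : ℝ) (hs : Real.sin (t/2) ≠ 0) : HasDerivAt gg (gg1 t) t := by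
  have h3 : HasDerivAt (fun t : ℝ => 2 * Real.sin (t/2)) (2 * (Real.cos (t/2) * (1/2))) t :=
    (hd_sin_half t).const_mul 2
  have h4 := h3.inv (by simp [hs])
  refine h4.congr_deriv (Eq.symm ?_)
  unfold gg1
  set s := Real.sin (t/2)
  set c := Real.cos (t/2)
  rw [mul_pow]
  field_simp
  norm_num

lemma hd_gg1 (t : ℝ) (hs : Real.sin (t/2) ≠ 0) : HasDerivAt gg1 (gg2 t) t := by
  have hv : HasDerivAt (fun t : ℝ => 4 * Real.sin (t/2)^2)
      (4 * (2 * Real.sin (t/2) * (Real.cos (t/2) * (1/2)))) t := by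
    have h2 := ((hd_sin_half t).pow 2).const_mul 4
    refine h2.congr_deriv ?_
    norm_num
  have hu := hd_cos_half t
  have h := (hu.div hv (by positivity)).neg
  refine h.congr_deriv (Eq.symm ?_)
  have hpy := Real.sin_sq_add_cos_sq (t/2)
  unfold gg2
  set s := Real.sin (t/2)
  set c := Real.cos (t/2)
  field_simp
  linear_combination -8 * hpy





lemma hd_cosM (M t : ℝ) (hM : M ≠ 0) :
    HasDerivAt (fun t : ℝ => -Real.cos (M*t)/M) (Real.sin (M*t)) t := by
  have h1 : HasDerivAt (fun t : ℝ => M*t) M t := by simpa using (hasDerivAt_id t).const_mul M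
  have h2 := ((Real.hasDerivAt_cos (M*t)).comp t h1).div_const M
  have h3 := h2.neg
  convert h3 using 1
  · rfl
  · rfl
  · funext x; simp [Function.comp]; ring
  · field_simp

lemma hd_sinM (M t : ℝ) (hM : M ≠ 0) :
    HasDerivAt (fun t : ℝ => Real.sin (M*t)/M) (Real.cos (M*t)) t := by
  have h1 : HasDerivAt (fun t : ℝ => M*t) M t := by simpa using (hasDerivAt_id t).const_mul M
  have h2 := ((Real.hasDerivAt_sin (M*t)).comp t h1).div_const M
  refine h2.congr_deriv (Eq.symm ?_)
  field_simp

lemma key_estimate (θ₀ : ℝ) (h0 : 0 < θ₀) (hπ : θ₀ < Real.pi) (K : ℕ) (hK : 1 ≤ K)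
    (θ : ℝ) (hθl : θ₀ ≤ θ) (hθr : θ ≤ Real.pi) :
    |(∑ n ∈ Finset.Icc 1 K, Real.sin (n * θ) / n) - (Real.pi - θ)/2
      + Real.cos (((K:ℝ) + 1/2) * θ) / (2 * K * Real.sin (θ/2))|
    ≤ (1/(4*Real.sin (θ₀/2)) + 1/(2*Real.sin (θ₀/2)^2)
        + Real.pi/(4*Real.sin (θ₀/2)^3)) / K^2 := by
  have hπ0 := Real.pi_pos
  set s₀ := Real.sin (θ₀/2) with hs₀def
  have hs₀ : 0 < s₀ := Real.sin_pos_of_pos_of_lt_pi (by linarith) (by linarith)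
  have hθpos : 0 < θ := lt_of_lt_of_le h0 hθl
  have hslb : ∀ t ∈ Set.Icc θ Real.pi, s₀ ≤ Real.sin (t/2) := by
    intro t ht
    exact Real.strictMonoOn_sin.monotoneOn
      ⟨by linarith, by linarith⟩ ⟨by linarith [ht.1], by linarith [ht.2]⟩ (by linarith [ht.1])
  have hsne : ∀ t ∈ Set.Icc θ Real.pi, Real.sin (t/2) ≠ 0 :=
    fun t ht => (lt_of_lt_of_le hs₀ (hslb t ht)).ne'
  have huIcc : Set.uIcc θ Real.pi = Set.Icc θ Real.pi := Set.uIcc_of_le hθr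
  obtain ⟨M, hMdef⟩ : ∃ x : ℝ, x = (K:ℝ) + 1/2 := ⟨_, rfl⟩
  rw [show ((K:ℝ) + 1/2) = M from hMdef.symm]
  have hMpos : 0 < M := by rw [hMdef]; positivity
  have hKR : (1:ℝ) ≤ (K:ℝ) := by exact_mod_cast hK
  have hKpos : (0:ℝ) < K := by linarith
  have hMK : (K:ℝ) ≤ M := by rw [hMdef]; linarith
  -- continuity
  have hcont_g : ContinuousOn gg (Set.uIcc θ Real.pi) := by
    rw [huIcc]
    exact ContinuousOn.inv₀
      (Continuous.continuousOn (continuous_const.mul (Real.continuous_sin.comp (continuous_id.div_const 2))))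
      (fun t ht => mul_ne_zero two_ne_zero (hsne t ht))
  have hcont_g1 : ContinuousOn gg1 (Set.uIcc θ Real.pi) := by
    rw [huIcc]
    exact (ContinuousOn.div
      (Continuous.continuousOn (Real.continuous_cos.comp (continuous_id.div_const 2)))
      (Continuous.continuousOn (continuous_const.mul ((Real.continuous_sin.comp (continuous_id.div_const 2)).pow 2)))
      (fun t ht => by
        have := hsne t ht
        show (4:ℝ) * Real.sin (t/2)^2 ≠ 0
        positivity)).neg
  have hcont_g2 : ContinuousOn gg2 (Set.uIcc θ Real.pi) := by
    rw [huIcc]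
    exact ContinuousOn.div
      (Continuous.continuousOn (continuous_const.add ((Real.continuous_cos.comp (continuous_id.div_const 2)).pow 2)))
      (Continuous.continuousOn (continuous_const.mul ((Real.continuous_sin.comp (continuous_id.div_const 2)).pow 3)))
      (fun t ht => by
        have := hsne t ht
        positivity)
  have hcont_sinM : Continuous (fun t : ℝ => Real.sin (M*t)) :=
    Real.continuous_sin.comp (continuous_const.mul continuous_id)
  have hcont_cosM : Continuous (fun t : ℝ => Real.cos (M*t)) :=
    Real.continuous_cos.comp (continuous_const.mul continuous_id)
  -- FTC for each n
  have hint1 : ∀ n ∈ Finset.Icc 1 K,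
      (∫ t in θ..Real.pi, Real.cos ((n:ℝ) * t)) = -(Real.sin ((n:ℝ)*θ)/(n:ℝ)) := by
    intro n hn
    have hn1 : 1 ≤ n := (Finset.mem_Icc.mp hn).1
    have hnR : (n:ℝ) ≠ 0 := Nat.cast_ne_zero.mpr (by omega)
    have hd : ∀ x ∈ Set.uIcc θ Real.pi,
        HasDerivAt (fun t => Real.sin ((n:ℝ)*t)/(n:ℝ)) (Real.cos ((n:ℝ)*x)) x := by
      intro x _
      exact hd_sinM (n:ℝ) x hnR
    rw [intervalIntegral.integral_eq_sub_of_hasDerivAt hd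
      ((Real.continuous_cos.comp (continuous_const.mul continuous_id)).intervalIntegrable θ Real.pi)]
    rw [Real.sin_nat_mul_pi]
    ring
  have hintcos : ∀ n ∈ Finset.Icc 1 K,
      IntervalIntegrable (fun t => Real.cos ((n:ℝ)*t)) volume θ Real.pi :=
    fun n _ => (Real.continuous_cos.comp (continuous_const.mul continuous_id)).intervalIntegrable θ Real.pi
  have hsum_int : (∫ t in θ..Real.pi, ∑ n ∈ Finset.Icc 1 K, Real.cos ((n:ℝ) * t))
      = -(∑ n ∈ Finset.Icc 1 K, Real.sin ((n:ℝ)*θ)/(n:ℝ)) := by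
    rw [intervalIntegral.integral_finset_sum hintcos, Finset.sum_congr rfl hint1]
    simp
  -- replace integrand by Dirichlet kernel
  have hEq : Set.EqOn (fun t => ∑ n ∈ Finset.Icc 1 K, Real.cos ((n:ℝ) * t))
      (fun t => Real.sin (M*t) * gg t - 1/2) (Set.uIcc θ Real.pi) := by
    intro t ht
    rw [huIcc] at ht
    simp only
    rw [sum_cos_eq K t (hsne t ht), ← hMdef]
    unfold gg
    rw [div_eq_mul_inv]
  have hint_sg : IntervalIntegrable (fun t => Real.sin (M*t) * gg t) volume θ Real.pi :=
    (hcont_sinM.continuousOn.mul hcont_g).intervalIntegrable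
  have hI1 : (∫ t in θ..Real.pi, (Real.sin (M*t) * gg t - 1/2))
      = (∫ t in θ..Real.pi, Real.sin (M*t) * gg t) - (Real.pi - θ)/2 := by
    rw [intervalIntegral.integral_sub hint_sg intervalIntegrable_const]
    simp
    ring
  set I1 := ∫ t in θ..Real.pi, Real.sin (M*t) * gg t with hI1def
  have hS : (∑ n ∈ Finset.Icc 1 K, Real.sin ((n:ℝ)*θ)/(n:ℝ))
      = (Real.pi - θ)/2 - I1 := by
    rw [intervalIntegral.integral_congr hEq, hI1] at hsum_int
    linarith
  -- IBP 1
  have hint_sinM : IntervalIntegrable (fun x => Real.sin (M*x)) volume θ Real.pi :=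
    hcont_sinM.intervalIntegrable θ Real.pi
  have hint_g1 : IntervalIntegrable gg1 volume θ Real.pi := hcont_g1.intervalIntegrable
  have hibp1 := intervalIntegral.integral_deriv_mul_eq_sub
    (u := fun t => -Real.cos (M*t)/M) (v := gg)
    (fun x _ => hd_cosM M x hMpos.ne') (fun x hx => hd_gg x (hsne x (huIcc ▸ hx)))
    hint_sinM hint_g1
  have hcosMpi : Real.cos (M * Real.pi) = 0 := by
    have h : M * Real.pi = (K:ℝ) * Real.pi + Real.pi/2 := by rw [hMdef]; ring
    rw [h, Real.cos_add_pi_div_two, Real.sin_nat_mul_pi, neg_zero]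
  set Jc := ∫ t in θ..Real.pi, Real.cos (M*t) * gg1 t with hJcdef
  have hint_cg1 : IntervalIntegrable (fun t => Real.cos (M*t) * gg1 t) volume θ Real.pi :=
    (hcont_cosM.continuousOn.mul hcont_g1).intervalIntegrable
  have hint_B : IntervalIntegrable (fun t => (-Real.cos (M*t)/M) * gg1 t) volume θ Real.pi := by
    have : (fun t => (-Real.cos (M*t)/M) * gg1 t) = fun t => (-(1:ℝ)/M) * (Real.cos (M*t) * gg1 t) := by
      funext t; ring
    rw [this]
    exact hint_cg1.const_mul _
  have hB : (∫ t in θ..Real.pi, (-Real.cos (M*t)/M) * gg1 t) = (-(1:ℝ)/M) * Jc := by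
    rw [hJcdef, ← intervalIntegral.integral_const_mul]
    apply intervalIntegral.integral_congr
    intro t _
    simp only
    ring
  have hI1val : I1 = Real.cos (M*θ)/M * gg θ + (1/M) * Jc := by
    rw [intervalIntegral.integral_add hint_sg hint_B, hB] at hibp1
    rw [hcosMpi, ← hI1def] at hibp1
    linear_combination hibp1
  -- IBP 2
  have hint_cosM : IntervalIntegrable (fun x => Real.cos (M*x)) volume θ Real.pi :=
    hcont_cosM.intervalIntegrable θ Real.pi
  have hint_g2 : IntervalIntegrable gg2 volume θ Real.pi := hcont_g2.intervalIntegrable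
  have hibp2 := intervalIntegral.integral_deriv_mul_eq_sub
    (u := fun t => Real.sin (M*t)/M) (v := gg1)
    (fun x _ => hd_sinM M x hMpos.ne') (fun x hx => hd_gg1 x (hsne x (huIcc ▸ hx)))
    hint_cosM hint_g2
  set T := ∫ t in θ..Real.pi, (Real.sin (M*t)/M) * gg2 t with hTdef
  have hint_sg2 : IntervalIntegrable (fun t => (Real.sin (M*t)/M) * gg2 t) volume θ Real.pi := by
    exact ((hcont_sinM.continuousOn.div_const M).mul hcont_g2).intervalIntegrable
  have hJcval : Jc = Real.sin (M*Real.pi)/M * gg1 Real.pi - Real.sin (M*θ)/M * gg1 θ - T := by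
    rw [intervalIntegral.integral_add hint_cg1 hint_sg2] at hibp2
    rw [← hJcdef, ← hTdef] at hibp2
    linear_combination hibp2
  -- bounds
  have hggb : ∀ t ∈ Set.Icc θ Real.pi, |gg t| ≤ 1/(2*s₀) := by
    intro t ht
    have h1 := hslb t ht
    have h2 : 0 < Real.sin (t/2) := lt_of_lt_of_le hs₀ h1
    rw [gg, abs_of_pos (by positivity), inv_eq_one_div]
    exact one_div_le_one_div_of_le (by positivity) (by linarith)
  have hg1b : ∀ t ∈ Set.Icc θ Real.pi, |gg1 t| ≤ 1/(4*s₀^2) := by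
    intro t ht
    have h1 := hslb t ht
    have h2 : 0 < Real.sin (t/2) := lt_of_lt_of_le hs₀ h1
    rw [gg1, abs_neg, abs_div]
    rw [abs_of_pos (show (0:ℝ) < 4*Real.sin (t/2)^2 by positivity)]
    have hc := Real.abs_cos_le_one (t/2)
    exact div_le_div₀ zero_le_one hc (by positivity) (by nlinarith)
  have hg2b : ∀ t ∈ Set.Icc θ Real.pi, |gg2 t| ≤ 1/(4*s₀^3) := by
    intro t ht
    have h1 := hslb t ht
    have h2 : 0 < Real.sin (t/2) := lt_of_lt_of_le hs₀ h1
    have hc2 : Real.cos (t/2)^2 ≤ 1 := Real.cos_sq_le_one (t/2)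
    have hp3 : s₀^3 ≤ Real.sin (t/2)^3 := pow_le_pow_left₀ hs₀.le h1 3
    rw [gg2, abs_div, abs_of_pos (show (0:ℝ) < 1 + Real.cos (t/2)^2 by positivity),
      abs_of_pos (show (0:ℝ) < 8*Real.sin (t/2)^3 by positivity)]
    calc (1 + Real.cos (t/2)^2) / (8*Real.sin (t/2)^3) ≤ 2 / (8*s₀^3) :=
          div_le_div₀ (by norm_num) (by linarith) (by positivity) (by linarith)
    _ = 1/(4*s₀^3) := by ring
  have hTb : |T| ≤ Real.pi * ((1/(4*s₀^3))/M) := by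
    rw [hTdef]
    have h := intervalIntegral.norm_integral_le_of_norm_le_const
      (C := (1/(4*s₀^3))/M) (f := fun t => (Real.sin (M*t)/M) * gg2 t) (a := θ) (b := Real.pi)
      (by
        intro x hx
        have hx' : x ∈ Set.Icc θ Real.pi := Set.mem_Icc_of_Ioc (Set.uIoc_of_le hθr ▸ hx)
        rw [Real.norm_eq_abs, abs_mul, abs_div, abs_of_pos hMpos]
        have h1 := hg2b x hx'
        have h2 : |Real.sin (M*x)| ≤ 1 := Real.abs_sin_le_one _
        calc |Real.sin (M*x)|/M * |gg2 x| ≤ 1/M * (1/(4*s₀^3)) :=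
              mul_le_mul (by apply div_le_div₀ (zero_le_one) h2 hMpos (le_refl M))
                h1 (abs_nonneg _) (by positivity)
        _ = (1/(4*s₀^3))/M := by ring)
    rw [Real.norm_eq_abs] at h
    calc |T| ≤ (1/(4*s₀^3))/M * |Real.pi - θ| := h
    _ ≤ (1/(4*s₀^3))/M * Real.pi := by
          apply mul_le_mul_of_nonneg_left _ (by positivity)
          rw [abs_of_nonneg (by linarith)]; linarith
    _ = Real.pi * ((1/(4*s₀^3))/M) := by ring
  have hJcb : |Jc| ≤ (1/(2*s₀^2) + Real.pi * (1/(4*s₀^3)))/M := by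
    rw [hJcval]
    have ha : |Real.sin (M*Real.pi)/M * gg1 Real.pi| ≤ 1/M * (1/(4*s₀^2)) := by
      rw [abs_mul, abs_div, abs_of_pos hMpos]
      exact mul_le_mul (div_le_div₀ zero_le_one (Real.abs_sin_le_one _) hMpos (le_refl M))
        (hg1b Real.pi ⟨hθr, le_refl _⟩) (abs_nonneg _) (by positivity)
    have hb : |Real.sin (M*θ)/M * gg1 θ| ≤ 1/M * (1/(4*s₀^2)) := by
      rw [abs_mul, abs_div, abs_of_pos hMpos]
      exact mul_le_mul (div_le_div₀ zero_le_one (Real.abs_sin_le_one _) hMpos (le_refl M))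
        (hg1b θ ⟨le_refl _, hθr⟩) (abs_nonneg _) (by positivity)
    have habs : |Real.sin (M*Real.pi)/M * gg1 Real.pi - Real.sin (M*θ)/M * gg1 θ - T|
        ≤ |Real.sin (M*Real.pi)/M * gg1 Real.pi| + |Real.sin (M*θ)/M * gg1 θ| + |T| := by
      calc |Real.sin (M*Real.pi)/M * gg1 Real.pi - Real.sin (M*θ)/M * gg1 θ - T|
          ≤ |Real.sin (M*Real.pi)/M * gg1 Real.pi - Real.sin (M*θ)/M * gg1 θ| + |T| := abs_sub _ _
      _ ≤ |Real.sin (M*Real.pi)/M * gg1 Real.pi| + |Real.sin (M*θ)/M * gg1 θ| + |T| := by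
            have := abs_sub (Real.sin (M*Real.pi)/M * gg1 Real.pi) (Real.sin (M*θ)/M * gg1 θ)
            linarith
    calc |Real.sin (M*Real.pi)/M * gg1 Real.pi - Real.sin (M*θ)/M * gg1 θ - T|
        ≤ 1/M * (1/(4*s₀^2)) + 1/M * (1/(4*s₀^2)) + Real.pi * ((1/(4*s₀^3))/M) := by
          linarith
    _ = (1/(2*s₀^2) + Real.pi * (1/(4*s₀^3)))/M := by field_simp; ring
  -- assemble
  have hcorr : Real.cos (M * θ) / (2 * K * Real.sin (θ/2))
      = Real.cos (M*θ) * gg θ * (1/(K:ℝ)) := by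
    rw [gg]
    ring
  have hEeq : (∑ n ∈ Finset.Icc 1 K, Real.sin ((n:ℝ) * θ) / (n:ℝ)) - (Real.pi - θ)/2
      + Real.cos (M * θ) / (2 * K * Real.sin (θ/2))
      = Real.cos (M*θ) * gg θ * (1/(K:ℝ) - 1/M) - (1/M) * Jc := by
    rw [hS, hI1val, hcorr]
    ring
  rw [hEeq]
  have ht1 : |Real.cos (M*θ) * gg θ * (1/(K:ℝ) - 1/M)| ≤ (1/(2*s₀)) * (1/(2*(K:ℝ)^2)) := by
    rw [abs_mul, abs_mul]
    have hdiff : |1/(K:ℝ) - 1/M| ≤ 1/(2*(K:ℝ)^2) := by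
      have heq : 1/(K:ℝ) - 1/M = (1/2)/((K:ℝ)*M) := by
        rw [hMdef]; field_simp; ring
      rw [heq, abs_of_pos (by positivity)]
      calc (1/2)/((K:ℝ)*M) ≤ (1/2)/((K:ℝ)*(K:ℝ)) :=
            div_le_div₀ (by norm_num) (le_refl _) (by positivity) (by nlinarith)
      _ = 1/(2*(K:ℝ)^2) := by ring
    calc |Real.cos (M*θ)| * |gg θ| * |1/(K:ℝ) - 1/M|
        ≤ 1 * (1/(2*s₀)) * (1/(2*(K:ℝ)^2)) :=
          mul_le_mul (mul_le_mul (Real.abs_cos_le_one _) (hggb θ ⟨le_refl _, hθr⟩)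
            (abs_nonneg _) zero_le_one) hdiff (abs_nonneg _) (by positivity)
    _ = (1/(2*s₀)) * (1/(2*(K:ℝ)^2)) := by ring
  have h2 : (1/M)*|Jc| ≤ (1/(2*s₀^2) + Real.pi * (1/(4*s₀^3)))/(K:ℝ)^2 := by
    calc (1/M)*|Jc| ≤ (1/M)*((1/(2*s₀^2) + Real.pi * (1/(4*s₀^3)))/M) :=
          mul_le_mul_of_nonneg_left hJcb (by positivity)
    _ = (1/(2*s₀^2) + Real.pi * (1/(4*s₀^3)))/M^2 := by ring
    _ ≤ (1/(2*s₀^2) + Real.pi * (1/(4*s₀^3)))/(K:ℝ)^2 :=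
          div_le_div₀ (by positivity) (le_refl _) (by positivity) (by nlinarith)
  have habs : |Real.cos (M*θ) * gg θ * (1/(K:ℝ) - 1/M) - (1/M) * Jc|
      ≤ |Real.cos (M*θ) * gg θ * (1/(K:ℝ) - 1/M)| + |(1/M) * Jc| :=
    abs_sub _ _
  have habs3 : |(1/M) * Jc| = (1/M)*|Jc| := by
    rw [abs_mul, abs_of_pos (show (0:ℝ) < 1/M by positivity)]
  have hs₀ne : s₀ ≠ 0 := hs₀.ne'
  have hKne : (K:ℝ) ≠ 0 := hKpos.ne'
  have hfin : (1/(2*s₀)) * (1/(2*(K:ℝ)^2)) + (1/(2*s₀^2) + Real.pi * (1/(4*s₀^3)))/(K:ℝ)^2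
      = (1/(4*s₀) + 1/(2*s₀^2) + Real.pi/(4*s₀^3)) / (K:ℝ)^2 := by
    field_simp
    ring
  linarith




lemma sum_split (K : ℕ) (θ : ℝ) :
    (∑ n ∈ (Finset.Icc (-(K : ℤ)) (K : ℤ)).erase 0,
        Complex.exp (Complex.I * (n : ℂ) * (θ : ℂ)) / (n : ℂ))
      = 2 * Complex.I * ((∑ n ∈ Finset.Icc 1 K, Real.sin (n * θ) / n : ℝ) : ℂ) := by
  have hset : (Finset.Icc (-(K:ℤ)) (K:ℤ)).erase 0
      = (Finset.Icc (1:ℤ) (K:ℤ)) ∪ (Finset.Icc (1:ℤ) (K:ℤ)).image (fun n => -n) := by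
    ext n
    simp only [Finset.mem_erase, Finset.mem_Icc, Finset.mem_union, Finset.mem_image]
    constructor
    · rintro ⟨hne, h1, h2⟩
      by_cases h : 0 < n
      · left; omega
      · right; exact ⟨-n, ⟨by omega, by omega⟩, by omega⟩
    · rintro (⟨h1, h2⟩ | ⟨a, ⟨ha1, ha2⟩, h⟩) <;> omega
  have hdisj : Disjoint (Finset.Icc (1:ℤ) (K:ℤ)) ((Finset.Icc (1:ℤ) (K:ℤ)).image (fun n => -n)) := by
    rw [Finset.disjoint_left]
    intro n hn hn2
    simp only [Finset.mem_Icc] at hn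
    simp only [Finset.mem_image, Finset.mem_Icc] at hn2
    obtain ⟨a, ⟨ha1, ha2⟩, h⟩ := hn2
    omega
  rw [hset, Finset.sum_union hdisj,
    Finset.sum_image (by intro a _ b _ h; simp at h; omega), ← Finset.sum_add_distrib]
  have hterm : ∀ n ∈ Finset.Icc (1:ℤ) (K:ℤ),
      Complex.exp (Complex.I * (n:ℂ) * (θ:ℂ)) / (n:ℂ)
        + Complex.exp (Complex.I * ((-n : ℤ):ℂ) * (θ:ℂ)) / ((-n : ℤ):ℂ)
      = 2 * Complex.I * ((Real.sin ((n:ℝ) * θ) / (n:ℝ) : ℝ) : ℂ) := by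
    intro n hn
    rw [Finset.mem_Icc] at hn
    have hne : (n:ℂ) ≠ 0 := by
      exact_mod_cast Int.cast_ne_zero.mpr (by omega)
    have h1 : Complex.I * (n:ℂ) * (θ:ℂ) = (((n:ℝ) * θ : ℝ) : ℂ) * Complex.I := by
      push_cast; ring
    have h2 : Complex.I * ((-n : ℤ):ℂ) * (θ:ℂ) = (-(((n:ℝ) * θ : ℝ) : ℂ)) * Complex.I := by
      push_cast; ring
    rw [h1, h2, Complex.exp_mul_I, Complex.exp_mul_I, Complex.cos_neg, Complex.sin_neg,
      ← Complex.ofReal_sin]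
    push_cast
    field_simp
    ring
  rw [Finset.sum_congr rfl hterm]
  have hre : Finset.Icc (1:ℤ) (K:ℤ) = (Finset.Icc 1 K).image (fun m : ℕ => (m:ℤ)) := by
    ext n
    simp only [Finset.mem_Icc, Finset.mem_image]
    constructor
    · intro ⟨hh1, hh2⟩; exact ⟨n.toNat, ⟨by omega, by omega⟩, by omega⟩
    · rintro ⟨a, ⟨ha1, ha2⟩, rfl⟩; omega
  rw [hre, Finset.sum_image (by intro a _ b _ h; simp at h; omega)]
  rw [← Finset.mul_sum, ← Complex.ofReal_sum]
  norm_num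

theorem stmt12 (θ₀ : ℝ) (hθ₀ : θ₀ ∈ Set.Ioo 0 Real.pi) :
    ∃ C > 0, ∃ K₀ : ℕ, ∀ K : ℕ, K₀ ≤ K → ∀ θ : ℝ, θ₀ ≤ |θ| → |θ| ≤ Real.pi →
      ‖(∑ n ∈ (Finset.Icc (-(K : ℤ)) (K : ℤ)).erase 0,
            Complex.exp (Complex.I * (n : ℂ) * (θ : ℂ)) / (n : ℂ))
          - Complex.I * ((Real.pi * Real.sign θ - θ : ℝ) : ℂ)
          + (Complex.I / (K : ℂ)) *
            ((Real.cos (((K : ℝ) + 1/2) * θ) / Real.sin (θ / 2) : ℝ) : ℂ)‖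
        ≤ C / (K : ℝ) ^ 2 := by
  obtain ⟨h0, hπ⟩ := hθ₀
  have hπ0 := Real.pi_pos
  have hs₀ : 0 < Real.sin (θ₀/2) := Real.sin_pos_of_pos_of_lt_pi (by linarith) (by linarith)
  refine ⟨2*(1/(4*Real.sin (θ₀/2)) + 1/(2*Real.sin (θ₀/2)^2) + Real.pi/(4*Real.sin (θ₀/2)^3)),
    by positivity, 1, ?_⟩
  intro K hK θ habs1 habs2
  have hKpos : (0:ℝ) < K := by exact_mod_cast Nat.pos_of_ne_zero (by omega)
  have hθne : θ ≠ 0 := by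
    intro h
    rw [h] at habs1
    simp at habs1
    linarith
  have hEbound : |(∑ n ∈ Finset.Icc 1 K, Real.sin (n * θ) / n) - (Real.pi * Real.sign θ - θ)/2
      + Real.cos (((K:ℝ) + 1/2) * θ) / (2 * K * Real.sin (θ/2))|
      ≤ (1/(4*Real.sin (θ₀/2)) + 1/(2*Real.sin (θ₀/2)^2)
          + Real.pi/(4*Real.sin (θ₀/2)^3)) / K^2 := by
    rcases lt_or_gt_of_ne hθne with hneg | hpos
    · have habs : |θ| = -θ := abs_of_neg hneg
      have hkey := key_estimate θ₀ h0 hπ K hK (-θ) (by linarith [habs ▸ habs1])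
        (by linarith [habs ▸ habs2])
      have hsign : Real.sign θ = -1 := Real.sign_of_neg hneg
      rw [hsign]
      have hcosrw : Real.cos (((K:ℝ)+1/2) * (-θ)) = Real.cos (((K:ℝ)+1/2) * θ) := by
        rw [show ((K:ℝ)+1/2) * (-θ) = -(((K:ℝ)+1/2)*θ) by ring, Real.cos_neg]
      have hsinrw : Real.sin ((-θ)/2) = -Real.sin (θ/2) := by
        rw [show (-θ)/2 = -(θ/2) by ring, Real.sin_neg]
      have hsumrw : (∑ n ∈ Finset.Icc 1 K, Real.sin ((n:ℝ) * (-θ)) / (n:ℝ))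
          = -(∑ n ∈ Finset.Icc 1 K, Real.sin ((n:ℝ) * θ) / (n:ℝ)) := by
        rw [← Finset.sum_neg_distrib]
        exact Finset.sum_congr rfl (fun n _ => by
          rw [show (n:ℝ)*(-θ) = -((n:ℝ)*θ) by ring, Real.sin_neg, neg_div])
      rw [hcosrw, hsinrw, hsumrw] at hkey
      have hdneg : Real.cos (((K:ℝ)+1/2)*θ) / (2*(K:ℝ)*(-Real.sin (θ/2)))
          = -(Real.cos (((K:ℝ)+1/2)*θ) / (2*(K:ℝ)*Real.sin (θ/2))) := by
        rw [mul_neg, div_neg]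
      rw [hdneg] at hkey
      have heq : -(∑ n ∈ Finset.Icc 1 K, Real.sin ((n:ℝ) * θ) / (n:ℝ)) - (Real.pi - -θ)/2
            + -(Real.cos (((K:ℝ)+1/2)*θ) / (2*(K:ℝ)*Real.sin (θ/2)))
          = -((∑ n ∈ Finset.Icc 1 K, Real.sin ((n:ℝ) * θ) / (n:ℝ))
            - (Real.pi * (-1) - θ)/2
            + Real.cos (((K:ℝ)+1/2)*θ) / (2*(K:ℝ)*Real.sin (θ/2))) := by
        ring
      rw [heq, abs_neg] at hkey
      exact hkey
    · have hsign : Real.sign θ = 1 := Real.sign_of_pos hpos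
      rw [hsign, mul_one]
      exact key_estimate θ₀ h0 hπ K hK θ (by rwa [abs_of_pos hpos] at habs1)
        (by rwa [abs_of_pos hpos] at habs2)
  have hexpr : (∑ n ∈ (Finset.Icc (-(K : ℤ)) (K : ℤ)).erase 0,
            Complex.exp (Complex.I * (n : ℂ) * (θ : ℂ)) / (n : ℂ))
          - Complex.I * ((Real.pi * Real.sign θ - θ : ℝ) : ℂ)
          + (Complex.I / (K : ℂ)) *
            ((Real.cos (((K : ℝ) + 1/2) * θ) / Real.sin (θ / 2) : ℝ) : ℂ)
      = 2 * Complex.I * ((((∑ n ∈ Finset.Icc 1 K, Real.sin (n * θ) / n)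
          - (Real.pi * Real.sign θ - θ)/2
          + Real.cos (((K:ℝ) + 1/2) * θ) / (2 * K * Real.sin (θ/2)) : ℝ)) : ℂ) := by
    rw [sum_split]
    push_cast
    ring
  rw [hexpr]
  have hnorm : ‖(2 : ℂ) * Complex.I * ((((∑ n ∈ Finset.Icc 1 K, Real.sin (n * θ) / n)
          - (Real.pi * Real.sign θ - θ)/2
          + Real.cos (((K:ℝ) + 1/2) * θ) / (2 * K * Real.sin (θ/2)) : ℝ)) : ℂ)‖
      = 2 * |(∑ n ∈ Finset.Icc 1 K, Real.sin (n * θ) / n) - (Real.pi * Real.sign θ - θ)/2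
          + Real.cos (((K:ℝ) + 1/2) * θ) / (2 * K * Real.sin (θ/2))| := by
    rw [norm_mul, norm_mul, Complex.norm_I, mul_one, Complex.norm_real, Real.norm_eq_abs]
    norm_num
  rw [hnorm]
  have : 2*(1/(4*Real.sin (θ₀/2)) + 1/(2*Real.sin (θ₀/2)^2)
      + Real.pi/(4*Real.sin (θ₀/2)^3)) / (K:ℝ)^2
      = 2*((1/(4*Real.sin (θ₀/2)) + 1/(2*Real.sin (θ₀/2)^2)
      + Real.pi/(4*Real.sin (θ₀/2)^3)) / (K:ℝ)^2) := by ring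
  rw [this]
  linarith
end

section
/- (Exact integral representation of the symmetric exponential sum.) For every integer K ≥ 1 and every θ ∈ (0, π], Σ_{n=−K, n≠0}^{K} e^{inθ}/n = i(π − θ) + i·sin(Kθ)/K + i∫_{π}^{θ} sin(Kτ)·cot(τ/2) dτ. -/
lemma twocos_sum (K : ℕ) (τ : ℝ) :
    (1 + ∑ n ∈ Finset.Icc 1 K, 2 * Real.cos (n * τ)) * Real.sin (τ / 2)
      = Real.sin (K * τ) * Real.cos (τ / 2) + Real.cos (K * τ) * Real.sin (τ / 2) := by
  induction K with
  | zero => simp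
  | succ K ih =>
    rw [Finset.sum_Icc_succ_top (by omega)]
    have h1 : ((K + 1 : ℕ) : ℝ) * τ = K * τ + τ := by push_cast; ring
    have h2 : (K : ℝ) * τ + τ = (K * τ + τ/2) + τ/2 := by ring
    rw [h1, h2, Real.sin_add (K * τ + τ/2), Real.cos_add (K * τ + τ/2),
      Real.sin_add (K * τ), Real.cos_add (K * τ)]
    have hpyth := Real.sin_sq_add_cos_sq (τ / 2)
    linear_combination ih - (Real.sin (K*τ) * Real.cos (τ/2) + Real.cos (K*τ) * Real.sin (τ/2)) * hpyth

lemma int_cos (n : ℕ) (hn : 1 ≤ n) (θ : ℝ) :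
    ∫ τ in Real.pi..θ, Real.cos (n * τ) = Real.sin (n * θ) / n := by
  have hn' : (n : ℝ) ≠ 0 := by positivity
  rw [intervalIntegral.integral_comp_mul_left (fun x => Real.cos x) hn',
    integral_cos, Real.sin_nat_mul_pi]
  simp [smul_eq_mul]
  ring

lemma key (K : ℕ) (hK : 1 ≤ K) (θ : ℝ) (hθ : θ ∈ Set.Ioc 0 Real.pi) :
    ∑ n ∈ Finset.Icc 1 K, 2 * Real.sin (n * θ) / n
      = (Real.pi - θ) + Real.sin (K * θ) / K
        + ∫ τ in Real.pi..θ, Real.sin (K * τ) * (Real.cos (τ/2) / Real.sin (τ/2)) := by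
  obtain ⟨hθ0, hθπ⟩ := hθ
  have hsin : ∀ τ ∈ Set.uIcc Real.pi θ, Real.sin (τ / 2) ≠ 0 := by
    intro τ hτ
    rw [Set.mem_uIcc] at hτ
    have h1 : 0 < τ := by rcases hτ with ⟨h, _⟩ | ⟨h, _⟩ <;> linarith [Real.pi_pos]
    have h2 : τ ≤ Real.pi := by rcases hτ with ⟨_, h⟩ | ⟨_, h⟩ <;> linarith
    have : 0 < Real.sin (τ / 2) :=
      Real.sin_pos_of_pos_of_lt_pi (by linarith) (by linarith [Real.pi_pos])
    linarith
  have hcot : IntervalIntegrable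
      (fun τ => Real.sin (K * τ) * (Real.cos (τ/2) / Real.sin (τ/2)))
      MeasureTheory.volume Real.pi θ := by
    apply ContinuousOn.intervalIntegrable
    apply ContinuousOn.mul ((Real.continuous_sin.comp
      (continuous_const.mul continuous_id)).continuousOn)
    apply ContinuousOn.div ((Real.continuous_cos.comp
        (continuous_id.div_const 2)).continuousOn)
      ((Real.continuous_sin.comp (continuous_id.div_const 2)).continuousOn)
    exact hsin
  have hR : (Real.pi - θ) + Real.sin (K * θ) / K
        + (∫ τ in Real.pi..θ, Real.sin (K * τ) * (Real.cos (τ/2) / Real.sin (τ/2)))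
      = ∫ τ in Real.pi..θ,
          (-1 + Real.cos (K * τ) + Real.sin (K * τ) * (Real.cos (τ/2) / Real.sin (τ/2))) := by
    have hc1 : IntervalIntegrable (fun _ : ℝ => (-1 : ℝ)) MeasureTheory.volume Real.pi θ :=
      intervalIntegrable_const
    have hc2 : IntervalIntegrable (fun τ => Real.cos (K * τ)) MeasureTheory.volume Real.pi θ :=
      (Real.continuous_cos.comp (continuous_const.mul continuous_id)).intervalIntegrable _ _
    rw [intervalIntegral.integral_add (hc1.add hc2) hcot,
      intervalIntegral.integral_add hc1 hc2,
      int_cos K hK θ, intervalIntegral.integral_const]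
    simp [smul_eq_mul]
  have hL : ∑ n ∈ Finset.Icc 1 K, 2 * Real.sin (n * θ) / n
      = ∫ τ in Real.pi..θ, ∑ n ∈ Finset.Icc 1 K, 2 * Real.cos (n * τ) := by
    rw [intervalIntegral.integral_finset_sum]
    · apply Finset.sum_congr rfl
      intro n hn
      rw [Finset.mem_Icc] at hn
      rw [intervalIntegral.integral_const_mul, int_cos n hn.1 θ]
      ring
    · intro n _
      exact (continuous_const.mul (Real.continuous_cos.comp
        (continuous_const.mul continuous_id))).intervalIntegrable _ _
  rw [hL, hR]
  apply intervalIntegral.integral_congr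
  intro τ hτ
  have hs := hsin τ hτ
  have h := twocos_sum K τ
  field_simp
  simp only [mul_comm τ (K:ℝ)]
  linear_combination h

lemma sum_cast' (K : ℕ) (f : ℤ → ℂ) :
    ∑ n ∈ Finset.Icc (1:ℤ) (K:ℤ), f n = ∑ n ∈ Finset.Icc 1 K, f (n:ℤ) := by
  refine Finset.sum_nbij' (i := Int.toNat) (j := fun m : ℕ => (m : ℤ)) ?_ ?_ ?_ ?_ ?_
  · intro a ha; simp [Finset.mem_Icc] at *; omega
  · intro a ha; simp [Finset.mem_Icc] at *; omega
  · intro a ha; simp [Finset.mem_Icc] at *; omega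
  · intro a ha; simp [Finset.mem_Icc] at *
  · intro a ha
    simp only [Finset.mem_Icc] at ha
    rw [Int.toNat_of_nonneg (by omega)]

lemma pair_id (n : ℤ) (hn : 1 ≤ n) (θ : ℝ) :
    Complex.exp (Complex.I * (n : ℂ) * (θ : ℂ)) / (n : ℂ)
      + Complex.exp (Complex.I * ((-n : ℤ) : ℂ) * (θ : ℂ)) / ((-n : ℤ) : ℂ)
      = Complex.I * ((2 * Real.sin (n * θ) / n : ℝ) : ℂ) := by
  have e1 : Complex.I * (n : ℂ) * (θ : ℂ) = ((n : ℂ) * θ) * Complex.I := by ring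
  have e2 : Complex.I * ((-n : ℤ) : ℂ) * (θ : ℂ) = (-((n : ℂ) * θ)) * Complex.I := by
    push_cast; ring
  rw [e1, e2, Complex.exp_mul_I, Complex.exp_mul_I, Complex.cos_neg, Complex.sin_neg]
  push_cast
  ring

theorem stmt13 (K : ℕ) (hK : 1 ≤ K) (θ : ℝ) (hθ : θ ∈ Set.Ioc 0 Real.pi) :
    ∑ n ∈ (Finset.Icc (-(K : ℤ)) (K : ℤ)).erase 0,
        Complex.exp (Complex.I * (n : ℂ) * (θ : ℂ)) / (n : ℂ) =
      Complex.I * ((Real.pi - θ : ℝ) : ℂ)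
      + Complex.I * ((Real.sin (K * θ) / K : ℝ) : ℂ)
      + Complex.I * ((∫ τ in Real.pi..θ,
          Real.sin (K * τ) * (Real.cos (τ / 2) / Real.sin (τ / 2)) : ℝ) : ℂ) := by
  have hsplit : (Finset.Icc (-(K:ℤ)) (K:ℤ)).erase 0
      = Finset.Icc 1 (K:ℤ) ∪ (Finset.Icc 1 (K:ℤ)).map ⟨Neg.neg, neg_injective⟩ := by
    ext n
    simp only [Finset.mem_erase, Finset.mem_Icc, Finset.mem_union, Finset.mem_map,
      Function.Embedding.coeFn_mk]
    constructor
    · rintro ⟨hn0, h1, h2⟩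
      rcases lt_or_gt_of_ne hn0 with h | h
      · exact Or.inr ⟨-n, ⟨by omega, by omega⟩, by omega⟩
      · exact Or.inl ⟨by omega, h2⟩
    · rintro (⟨h1, h2⟩ | ⟨a, ⟨ha1, ha2⟩, rfl⟩) <;> exact ⟨by omega, by omega, by omega⟩
  have hdisj : Disjoint (Finset.Icc 1 (K:ℤ))
      ((Finset.Icc 1 (K:ℤ)).map ⟨Neg.neg, neg_injective⟩) := by
    rw [Finset.disjoint_left]
    intro n hn hm
    simp only [Finset.mem_Icc, Finset.mem_map, Function.Embedding.coeFn_mk] at hn hm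
    obtain ⟨a, ha, rfl⟩ := hm
    omega
  rw [hsplit, Finset.sum_union hdisj, Finset.sum_map]
  simp only [Function.Embedding.coeFn_mk]
  rw [← Finset.sum_add_distrib]
  rw [Finset.sum_congr rfl (fun n hn => pair_id n (Finset.mem_Icc.mp hn).1 θ)]
  rw [sum_cast' K (fun n => Complex.I * ((2 * Real.sin (n * θ) / n : ℝ) : ℂ)),
    ← Finset.mul_sum, ← Complex.ofReal_sum]
  have hcast : ∑ n ∈ Finset.Icc 1 K, (2 * Real.sin ((n : ℤ) * θ) / (n : ℤ) : ℝ)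
      = ∑ n ∈ Finset.Icc 1 K, 2 * Real.sin (n * θ) / n := by
    apply Finset.sum_congr rfl; intro n _; push_cast; ring
  rw [hcast, key K hK θ hθ]
  push_cast
  ring
end

section
/- (Stability of Lorentzian summands under O(ε²) perturbation of the center.) For every c > 0 and C > 0 there exist K > 0 and ε₀ ∈ (0,1] such that for all ε ∈ (0, ε₀], all x, μ₀, μ ∈ ℝ with |μ − μ₀| ≤ Cε², and all ν₀ ≥ c, the inequality |1/((x−μ)² + ε²ν₀²) − 1/((x−μ₀)² + ε²ν₀²)| ≤ Kε/((x−μ₀)² + ε²ν₀²) holds. -/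
private lemma keyaux (c C ε a b ν₀ : ℝ) (hc : 0 < c) (hC : 0 < C) (hε : 0 < ε)
    (hε1 : ε ≤ 1) (hν : c ≤ ν₀) (h1 : |b - a| ≤ C * ε ^ 2) :
    |(b ^ 2 + ε ^ 2 * ν₀ ^ 2) - (a ^ 2 + ε ^ 2 * ν₀ ^ 2)|
      ≤ (C / c + C ^ 2 / c ^ 2) * ε * (a ^ 2 + ε ^ 2 * ν₀ ^ 2) := by
  have hν0 : (0:ℝ) < ν₀ := lt_of_lt_of_le hc hν
  have habs : |(b ^ 2 + ε ^ 2 * ν₀ ^ 2) - (a ^ 2 + ε ^ 2 * ν₀ ^ 2)|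
      = |b - a| * |b + a| := by rw [← abs_mul]; congr 1; ring
  have h2 : |b + a| ≤ 2 * |a| + C * ε ^ 2 := by
    calc |b + a| ≤ |b| + |a| := abs_add_le _ _
      _ ≤ (|a| + C * ε ^ 2) + |a| := by
          have hb : |b| - |a| ≤ |b - a| := abs_sub_abs_le_abs_sub b a
          linarith
      _ = 2 * |a| + C * ε ^ 2 := by ring
  rw [habs]
  have h3 : |b - a| * |b + a| ≤ C * ε ^ 2 * (2 * |a| + C * ε ^ 2) :=
    mul_le_mul h1 h2 (abs_nonneg _) (by positivity)
  refine h3.trans ?_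
  have ha : |a| ^ 2 = a ^ 2 := sq_abs a
  have hc2 : c ^ 2 ≤ ν₀ ^ 2 := by nlinarith
  have hε2 : ε ^ 2 ≤ ε := by nlinarith
  have hterm1 : C * ε ^ 2 * (2 * |a|) ≤ (C / c) * ε * (a ^ 2 + ε ^ 2 * ν₀ ^ 2) := by
    have hamgm : 2 * |a| * (ε * c) ≤ a ^ 2 + ε ^ 2 * c ^ 2 := by
      nlinarith [sq_nonneg (|a| - ε * c)]
    have hle : 2 * |a| ≤ (a ^ 2 + ε ^ 2 * ν₀ ^ 2) / (ε * c) := by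
      rw [le_div_iff₀ (by positivity)]
      nlinarith
    calc C * ε ^ 2 * (2 * |a|) ≤ C * ε ^ 2 * ((a ^ 2 + ε ^ 2 * ν₀ ^ 2) / (ε * c)) :=
          mul_le_mul_of_nonneg_left hle (by positivity)
      _ = (C / c) * ε * (a ^ 2 + ε ^ 2 * ν₀ ^ 2) := by field_simp
  have hterm2 : C * ε ^ 2 * (C * ε ^ 2)
      ≤ (C ^ 2 / c ^ 2) * ε * (a ^ 2 + ε ^ 2 * ν₀ ^ 2) := by
    have hDge : ε ^ 2 * c ^ 2 ≤ a ^ 2 + ε ^ 2 * ν₀ ^ 2 := by nlinarith [sq_nonneg a]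
    calc C * ε ^ 2 * (C * ε ^ 2) = (C ^ 2 / c ^ 2) * ε ^ 2 * (ε ^ 2 * c ^ 2) := by
          field_simp
      _ ≤ (C ^ 2 / c ^ 2) * ε * (ε ^ 2 * c ^ 2) := by
          apply mul_le_mul_of_nonneg_right _ (by positivity)
          exact mul_le_mul_of_nonneg_left hε2 (by positivity)
      _ ≤ (C ^ 2 / c ^ 2) * ε * (a ^ 2 + ε ^ 2 * ν₀ ^ 2) :=
          mul_le_mul_of_nonneg_left hDge (by positivity)
  nlinarith [hterm1, hterm2]

private lemma divaux (D D₀ M : ℝ) (hD : 0 < D) (hD0 : 0 < D₀)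
    (key : |D₀ - D| ≤ M * D) : |1 / D - 1 / D₀| ≤ M / D₀ := by
  have hdiff : 1 / D - 1 / D₀ = (D₀ - D) / (D * D₀) := by field_simp
  rw [hdiff, abs_div, abs_of_pos (mul_pos hD hD0), div_le_div_iff₀ (by positivity) hD0]
  calc |D₀ - D| * D₀ ≤ (M * D) * D₀ := mul_le_mul_of_nonneg_right key hD0.le
    _ = M * (D * D₀) := by ring

theorem stmt15 (c C : ℝ) (hc : 0 < c) (hC : 0 < C) :
    ∃ K > 0, ∃ ε₀ : ℝ, 0 < ε₀ ∧ ε₀ ≤ 1 ∧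
      ∀ ε : ℝ, 0 < ε → ε ≤ ε₀ →
        ∀ x μ₀ μ ν₀ : ℝ, |μ - μ₀| ≤ C * ε ^ 2 → c ≤ ν₀ →
          |1 / ((x - μ) ^ 2 + ε ^ 2 * ν₀ ^ 2) - 1 / ((x - μ₀) ^ 2 + ε ^ 2 * ν₀ ^ 2)|
            ≤ K * ε / ((x - μ₀) ^ 2 + ε ^ 2 * ν₀ ^ 2) := by
  refine ⟨C / c + C ^ 2 / c ^ 2, by positivity, 1, one_pos, le_refl 1,
    fun ε hε hε1 x μ₀ μ ν₀ hμ hν => ?_⟩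
  have hν0 : (0:ℝ) < ν₀ := lt_of_lt_of_le hc hν
  have hD : (0:ℝ) < (x - μ) ^ 2 + ε ^ 2 * ν₀ ^ 2 := by positivity
  have hD0 : (0:ℝ) < (x - μ₀) ^ 2 + ε ^ 2 * ν₀ ^ 2 := by positivity
  have h1 : |(x - μ₀) - (x - μ)| ≤ C * ε ^ 2 := by
    have h : (x - μ₀) - (x - μ) = μ - μ₀ := by ring
    rw [h]; exact hμ
  have key := keyaux c C ε (x - μ) (x - μ₀) ν₀ hc hC hε hε1 hν h1
  exact divaux _ _ _ hD hD0 key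
end

section
/- (Derivative of the Bohr–Sommerfeld action.) Let J ⊂ ℝ be an open interval, F : J → (0,∞) continuously differentiable, Y : J → ℝ an antiderivative of F (Y′ = F), and t ∈ ℝ. Let I ⊂ ℝ be an open interval and λ_min, λ_max : I → J differentiable functions with λ_min(x) < λ_max(x) for all x ∈ I. Define θ(λ, x) := (x + πF(λ) + 2λt)/F(λ), and suppose there are constants θ₊ and θ₋ such that θ(λ_max(x), x) = θ₊ and θ(λ_min(x), x) = θ₋ for all x ∈ I. Define g₀(x) := θ₊·Y(λ_max(x)) − θ₋·Y(λ_min(x)) − ∫_{λ_min(x)}^{λ_max(x)} θ(λ, x)·F(λ) dλ. Then g₀ is differentiable on I and g₀′(x) = −(λ_max(x) − λ_min(x)) for all x ∈ I. -/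
theorem stmt16 (j₁ j₂ : ℝ) (hJ : j₁ < j₂) (t : ℝ)
    (F F' Y : ℝ → ℝ)
    (hFpos : ∀ l ∈ Set.Ioo j₁ j₂, 0 < F l)
    (hFd : ∀ l ∈ Set.Ioo j₁ j₂, HasDerivAt F (F' l) l)
    (hF'c : ContinuousOn F' (Set.Ioo j₁ j₂))
    (hY : ∀ l ∈ Set.Ioo j₁ j₂, HasDerivAt Y (F l) l)
    (i₁ i₂ : ℝ) (hI : i₁ < i₂)
    (lmin lmax lmin' lmax' : ℝ → ℝ)
    (hlmind : ∀ x ∈ Set.Ioo i₁ i₂, HasDerivAt lmin (lmin' x) x)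
    (hlmaxd : ∀ x ∈ Set.Ioo i₁ i₂, HasDerivAt lmax (lmax' x) x)
    (hmem : ∀ x ∈ Set.Ioo i₁ i₂, lmin x ∈ Set.Ioo j₁ j₂ ∧ lmax x ∈ Set.Ioo j₁ j₂ ∧
      lmin x < lmax x)
    (θp θm : ℝ)
    (hθp : ∀ x ∈ Set.Ioo i₁ i₂,
      (x + Real.pi * F (lmax x) + 2 * lmax x * t) / F (lmax x) = θp)
    (hθm : ∀ x ∈ Set.Ioo i₁ i₂,
      (x + Real.pi * F (lmin x) + 2 * lmin x * t) / F (lmin x) = θm) :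
    ∀ x ∈ Set.Ioo i₁ i₂,
      HasDerivAt (fun z => θp * Y (lmax z) - θm * Y (lmin z) -
          ∫ l in (lmin z)..(lmax z), ((z + Real.pi * F l + 2 * l * t) / F l) * F l)
        (-(lmax x - lmin x)) x := by
  intro x hx
  obtain ⟨hminx, hmaxx, hltx⟩ := hmem x hx
  -- The simplified function H
  have hval : ∀ z ∈ Set.Ioo i₁ i₂,
      (θp * Y (lmax z) - θm * Y (lmin z) -
        ∫ l in (lmin z)..(lmax z), ((z + Real.pi * F l + 2 * l * t) / F l) * F l)
      = θp * Y (lmax z) - θm * Y (lmin z) -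
        ((z * lmax z + Real.pi * Y (lmax z) + t * (lmax z) ^ 2)
          - (z * lmin z + Real.pi * Y (lmin z) + t * (lmin z) ^ 2)) := by
    intro z hz
    obtain ⟨hmin, hmax, hlt⟩ := hmem z hz
    have hsub : Set.uIcc (lmin z) (lmax z) ⊆ Set.Ioo j₁ j₂ :=
      Set.ordConnected_Ioo.uIcc_subset hmin hmax
    have hcongr : (∫ l in (lmin z)..(lmax z), ((z + Real.pi * F l + 2 * l * t) / F l) * F l)
        = ∫ l in (lmin z)..(lmax z), (z + Real.pi * F l + 2 * l * t) := by
      apply intervalIntegral.integral_congr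
      intro l hl
      have hF := (hFpos l (hsub hl)).ne'
      field_simp
    rw [hcongr]
    have hFTC : (∫ l in (lmin z)..(lmax z), (z + Real.pi * F l + 2 * l * t))
        = (z * lmax z + Real.pi * Y (lmax z) + t * (lmax z) ^ 2)
          - (z * lmin z + Real.pi * Y (lmin z) + t * (lmin z) ^ 2) := by
      apply intervalIntegral.integral_eq_sub_of_hasDerivAt
        (f := fun l : ℝ => z * l + Real.pi * Y l + t * l ^ 2)
        (f' := fun l : ℝ => z + Real.pi * F l + 2 * l * t)
      · intro l hl
        have hl' := hsub hl
        have h1 : HasDerivAt (fun l : ℝ => z * l + Real.pi * Y l + t * l ^ 2)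
            (z * 1 + Real.pi * F l + t * (2 * l ^ 1)) l :=
          (((hasDerivAt_id l).const_mul z).add ((hY l hl').const_mul Real.pi)).add
            ((hasDerivAt_pow 2 l).const_mul t)
        exact h1.congr_deriv (by ring)
      · apply ContinuousOn.intervalIntegrable
        apply ContinuousOn.add
        apply ContinuousOn.add
        · exact continuousOn_const
        · exact continuousOn_const.mul fun l hl => ((hFd l (hsub hl)).continuousAt).continuousWithinAt
        · exact (by fun_prop : Continuous fun l : ℝ => 2 * l * t).continuousOn
    rw [hFTC]
  -- derivative of H
  have hYmax : HasDerivAt (fun z => Y (lmax z)) (F (lmax x) * lmax' x) x :=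
    (hY _ hmaxx).comp x (hlmaxd x hx)
  have hYmin : HasDerivAt (fun z => Y (lmin z)) (F (lmin x) * lmin' x) x :=
    (hY _ hminx).comp x (hlmind x hx)
  have hH : HasDerivAt (fun z => θp * Y (lmax z) - θm * Y (lmin z) -
      ((z * lmax z + Real.pi * Y (lmax z) + t * (lmax z) ^ 2)
        - (z * lmin z + Real.pi * Y (lmin z) + t * (lmin z) ^ 2)))
      (θp * (F (lmax x) * lmax' x) - θm * (F (lmin x) * lmin' x) -
        ((1 * lmax x + x * lmax' x + Real.pi * (F (lmax x) * lmax' x)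
            + t * (2 * lmax x ^ 1 * lmax' x))
          - (1 * lmin x + x * lmin' x + Real.pi * (F (lmin x) * lmin' x)
            + t * (2 * lmin x ^ 1 * lmin' x)))) x := by
    exact ((hYmax.const_mul θp).sub (hYmin.const_mul θm)).sub
      (((((hasDerivAt_id x).mul (hlmaxd x hx)).add (hYmax.const_mul Real.pi)).add
          (((hlmaxd x hx).pow 2).const_mul t)).sub
        ((((hasDerivAt_id x).mul (hlmind x hx)).add (hYmin.const_mul Real.pi)).add
          (((hlmind x hx).pow 2).const_mul t)))
  have heq : (fun z => θp * Y (lmax z) - θm * Y (lmin z) -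
      ∫ l in (lmin z)..(lmax z), ((z + Real.pi * F l + 2 * l * t) / F l) * F l)
      =ᶠ[nhds x] (fun z => θp * Y (lmax z) - θm * Y (lmin z) -
      ((z * lmax z + Real.pi * Y (lmax z) + t * (lmax z) ^ 2)
        - (z * lmin z + Real.pi * Y (lmin z) + t * (lmin z) ^ 2))) :=
    Filter.eventuallyEq_of_mem (isOpen_Ioo.mem_nhds hx) hval
  have hD : θp * (F (lmax x) * lmax' x) - θm * (F (lmin x) * lmin' x) -
        ((1 * lmax x + x * lmax' x + Real.pi * (F (lmax x) * lmax' x)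
            + t * (2 * lmax x ^ 1 * lmax' x))
          - (1 * lmin x + x * lmin' x + Real.pi * (F (lmin x) * lmin' x)
            + t * (2 * lmin x ^ 1 * lmin' x))) = -(lmax x - lmin x) := by
    have hFMax := (hFpos _ hmaxx).ne'
    have hFMin := (hFpos _ hminx).ne'
    have eqp := hθp x hx
    have eqm := hθm x hx
    field_simp at eqp eqm
    linear_combination lmin' x * eqm - lmax' x * eqp
  exact hD ▸ (hH.congr_of_eventuallyEq heq)
end

section
/- (Asymptotics of the smallest quantized eigenvalues under algebraic decay.) Let p > 1/2, A > 0, L > 0, and let F : (−L, 0) → (0, ∞) be a continuous integrable function such that F(λ)·(−λ)^{1/(2p)} → A as λ → 0⁻. Set M := ∫_{−L}^{0} F(λ) dλ and define Λ : (0, M) → (−L, 0) as the inverse of the strictly increasing map λ ↦ ∫_{−L}^{λ} F(η) dη, i.e. ∫_{−L}^{Λ(y)} F(λ) dλ = y. Then, as y → M⁻, Λ(y) = −((2p−1)(M−y)/(2pA))^{2p/(2p−1)}·(1 + o(1)). In particular, if λ_j := Λ(ε(j − 1/2)) for j = 1, …, N with ε = M/N, then as ε → 0 the eigenvalues nearest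 0 satisfy λ_{N+1−j} = −((2p−1)·ε(j−1/2)/(2pA))^{2p/(2p−1)}·(1 + o(1)) uniformly for j in any fixed finite range. -/
open MeasureTheory Set Filter

set_option maxHeartbeats 2000000 in
theorem stmt17 (p A L : ℝ) (hp : 1 / 2 < p) (hA : 0 < A) (hL : 0 < L)
    (F : ℝ → ℝ)
    (hFc : ContinuousOn F (Set.Ioo (-L) 0))
    (hFpos : ∀ l ∈ Set.Ioo (-L) 0, 0 < F l)
    (hFint : IntegrableOn F (Set.Ioo (-L) 0))
    (hFlim : Filter.Tendsto (fun l => F l * (-l) ^ (1 / (2 * p)))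
      (nhdsWithin 0 (Set.Iio 0)) (nhds A))
    (M : ℝ) (hM : M = ∫ l in Set.Ioo (-L) 0, F l)
    (Λ : ℝ → ℝ)
    (hΛ : ∀ y ∈ Set.Ioo 0 M, Λ y ∈ Set.Ioo (-L) 0 ∧
      (∫ l in Set.Ioo (-L) (Λ y), F l) = y) :
    Filter.Tendsto (fun y => Λ y /
        (-(((2 * p - 1) * (M - y) / (2 * p * A)) ^ (2 * p / (2 * p - 1)))))
      (nhdsWithin M (Set.Iio M)) (nhds 1) ∧
    ∀ j : ℕ, 1 ≤ j →
      Filter.Tendsto (fun ε => Λ (M - ε * ((j : ℝ) - 1/2)) /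
          (-(((2 * p - 1) * (ε * ((j : ℝ) - 1/2)) / (2 * p * A)) ^ (2 * p / (2 * p - 1)))))
        (nhdsWithin 0 (Set.Ioi 0)) (nhds 1) := by
  have h2p : (0:ℝ) < 2*p := by linarith
  have hq0 : (0:ℝ) < 2*p - 1 := by linarith
  set a : ℝ := 1/(2*p) with ha_def
  have ha0 : 0 < a := by positivity
  have ha1 : a < 1 := by rw [ha_def, div_lt_one h2p]; linarith
  set q : ℝ := 1 - a with hq_def
  have hq : 0 < q := by linarith
  have hexp : 2*p/(2*p-1) = 1/q := by
    rw [hq_def, ha_def]; field_simp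
  have hcoef : ∀ y:ℝ, (2*p-1)*y/(2*p*A) = q*y/A := by
    intro y; rw [hq_def, ha_def]; field_simp
  -- integrability of F on subintervals
  have hFint' : ∀ c d : ℝ, -L ≤ c → d ≤ 0 → IntegrableOn F (Ioo c d) :=
    fun c d hc hd => hFint.mono_set (Ioo_subset_Ioo hc hd)
  -- splitting the integral
  have hsplit : ∀ c, c ∈ Ioo (-L) 0 →
      (∫ l in Ioo (-L) 0, F l) = (∫ l in Ioo (-L) c, F l) + ∫ l in Ioo c 0, F l := by
    intro c hc
    have h1 : IntegrableOn F (Ioc (-L) c) :=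
      hFint.mono_set (fun x hx => ⟨hx.1, lt_of_le_of_lt hx.2 hc.2⟩)
    have hdis : Disjoint (Ioc (-L) c) (Ioo c 0) := by
      rw [Set.disjoint_left]
      rintro x ⟨_, h1⟩ ⟨h2, _⟩
      exact absurd h1 (not_le.2 h2)
    rw [← Ioc_union_Ioo_eq_Ioo hc.1.le hc.2,
      setIntegral_union hdis measurableSet_Ioo h1 (hFint' c 0 hc.1.le le_rfl),
      integral_Ioc_eq_integral_Ioo]
  -- tail formula
  have htail : ∀ y ∈ Ioo 0 M, (∫ l in Ioo (Λ y) 0, F l) = M - y := by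
    intro y hy
    obtain ⟨h1, h2⟩ := hΛ y hy
    have := hsplit (Λ y) h1
    rw [← hM, h2] at this; linarith
  -- positivity of tail integrals
  have hpos : ∀ c ∈ Ioo (-L) 0, 0 < ∫ l in Ioo c 0, F l := by
    intro c hc
    have hint : IntervalIntegrable F volume c 0 := by
      rw [intervalIntegrable_iff_integrableOn_Ioc_of_le hc.2.le]
      exact (hFint' c 0 hc.1.le le_rfl).congr_set_ae Ioo_ae_eq_Ioc.symm
    have := intervalIntegral.intervalIntegral_pos_of_pos_on hint
      (fun x hx => hFpos x ⟨lt_trans hc.1 hx.1, hx.2⟩) hc.2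
    rwa [intervalIntegral.integral_of_le hc.2.le, integral_Ioc_eq_integral_Ioo] at this
  have hM_pos : 0 < M := by
    have h1 : (0:ℝ) ≤ ∫ l in Ioo (-L) (-(L/2)), F l :=
      setIntegral_nonneg measurableSet_Ioo
        (fun x hx => (hFpos x ⟨hx.1, lt_of_lt_of_le hx.2 (by linarith)⟩).le)
    have h2 := hpos (-(L/2)) ⟨by linarith, by linarith⟩
    have h3 := hsplit (-(L/2)) ⟨by linarith, by linarith⟩
    rw [← hM] at h3; linarith
  -- eventually Λ y ∈ Ioo (-t0) 0
  have hΛev : ∀ t0 : ℝ, 0 < t0 → t0 < L →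
      ∀ᶠ y in nhdsWithin M (Iio M), Λ y ∈ Ioo (-t0) 0 ∧ y ∈ Ioo 0 M := by
    intro t0 ht0 ht0L
    have hmem : (-t0) ∈ Ioo (-L) 0 := ⟨by linarith, by linarith⟩
    have hy0M : (∫ l in Ioo (-L) (-t0), F l) < M := by
      have := hsplit (-t0) hmem
      rw [← hM] at this
      have := hpos (-t0) hmem
      linarith
    have hmax : max (∫ l in Ioo (-L) (-t0), F l) 0 < M := max_lt hy0M hM_pos
    have hIoi : Ioi (max (∫ l in Ioo (-L) (-t0), F l) 0) ∈ nhdsWithin M (Iio M) :=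
      mem_nhdsWithin_of_mem_nhds (Ioi_mem_nhds hmax)
    filter_upwards [hIoi, self_mem_nhdsWithin] with y hy1 hy2
    have hyM : y < M := hy2
    have hy0lt : (∫ l in Ioo (-L) (-t0), F l) < y := lt_of_le_of_lt (le_max_left _ _) hy1
    have hypos : 0 < y := lt_of_le_of_lt (le_max_right _ _) hy1
    have hyIoo : y ∈ Ioo 0 M := ⟨hypos, hyM⟩
    obtain ⟨hΛ1, hΛ2⟩ := hΛ y hyIoo
    refine ⟨⟨?_, hΛ1.2⟩, hyIoo⟩
    by_contra hcon
    push_neg at hcon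
    have hle : (∫ l in Ioo (-L) (Λ y), F l) ≤ ∫ l in Ioo (-L) (-t0), F l := by
      apply setIntegral_mono_set (hFint' (-L) (-t0) le_rfl (by linarith))
      · refine (ae_restrict_iff' measurableSet_Ioo).2 (ae_of_all _ fun x hx =>
          (hFpos x ⟨hx.1, lt_of_lt_of_le hx.2 (by linarith : -t0 ≤ 0)⟩).le)
      · exact (Ioo_subset_Ioo_right hcon).eventuallyLE
    rw [hΛ2] at hle
    linarith
  -- integral of the model function
  have hmodel_int : ∀ t : ℝ, IntegrableOn (fun l => (-l) ^ (-a)) (Ioo (-t) 0) := by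
    intro t
    have h1 : IntervalIntegrable (fun x : ℝ => x ^ (-a)) volume 0 t :=
      intervalIntegral.intervalIntegrable_rpow' (by linarith)
    have h2 := (IntervalIntegrable.iff_comp_neg (f := fun x : ℝ => x ^ (-a)) (a := 0) (b := t)).1 h1
    have h3 : IntervalIntegrable (fun x : ℝ => (-x) ^ (-a)) volume (-t) 0 := by
      simpa using h2.symm
    rcases le_or_gt (-t) 0 with h | h
    · exact ((intervalIntegrable_iff_integrableOn_Ioc_of_le h).1 h3).mono_set
        Ioo_subset_Ioc_self
    · simp [Ioo_eq_empty_of_le h.le, IntegrableOn]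
  have hmodel_val : ∀ t : ℝ, 0 < t →
      (∫ l in Ioo (-t) 0, (-l) ^ (-a)) = t ^ q / q := by
    intro t ht
    rw [← integral_Ioc_eq_integral_Ioo, ← intervalIntegral.integral_of_le (by linarith)]
    have : (∫ x in (-t)..(0:ℝ), (-x) ^ (-a)) = ∫ x in (-(0:ℝ))..(-(-t)), x ^ (-a) :=
      intervalIntegral.integral_comp_neg (fun x => x ^ (-a))
    rw [this]
    simp only [neg_zero, neg_neg]
    rw [integral_rpow (Or.inl (by linarith : (-1:ℝ) < -a)),
      Real.zero_rpow (by linarith : -a + 1 ≠ 0),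
      show -a + 1 = q by rw [hq_def]; ring]
    ring
  -- the key ratio function
  set g : ℝ → ℝ := fun y => q * (M - y) / A / (-Λ y) ^ q with hg_def
  have hg_tendsto : Filter.Tendsto g (nhdsWithin M (Iio M)) (nhds 1) := by
    rw [Metric.tendsto_nhds]
    intro ε hε
    set δ : ℝ := A * ε / 2 with hδ_def
    have hδ : 0 < δ := by positivity
    -- get t0' from hFlim
    have hev : ∀ᶠ l in nhdsWithin 0 (Iio 0), dist (F l * (-l) ^ a) A < δ :=
      Metric.tendsto_nhds.1 hFlim δ hδ
    rw [eventually_iff_exists_mem] at hev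
    obtain ⟨s, hs, hsd⟩ := hev
    rw [Metric.mem_nhdsWithin_iff] at hs
    obtain ⟨t1, ht1, hball⟩ := hs
    set t0 : ℝ := min t1 (L/2) with ht0_def
    have ht0 : 0 < t0 := lt_min ht1 (by linarith)
    have ht0L : t0 < L := lt_of_le_of_lt (min_le_right _ _) (by linarith)
    have hbound : ∀ l ∈ Ioo (-t0) 0, dist (F l * (-l) ^ a) A < δ := by
      intro l hl
      apply hsd
      apply hball
      constructor
      · rw [Metric.mem_ball, Real.dist_eq, sub_zero, abs_of_neg hl.2]
        have : -t1 < l := lt_of_le_of_lt (neg_le_neg (min_le_left _ _)) hl.1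
        linarith
      · exact hl.2
    filter_upwards [hΛev t0 ht0 ht0L] with y ⟨hΛmem, hymem⟩
    set t : ℝ := -Λ y with ht_def
    have htpos : 0 < t := by simp [ht_def]; exact hΛmem.2
    have htt0 : t < t0 := by
      have := hΛmem.1; simp only [ht_def]; linarith
    have hΛLmem : Λ y ∈ Ioo (-L) 0 := (hΛ y hymem).1
    -- integral bounds
    have hsubset : Ioo (-t) 0 ⊆ Ioo (-t0) 0 := Ioo_subset_Ioo (by linarith) le_rfl
    have hFb : ∀ l ∈ Ioo (-t) 0,
        (A - δ) * (-l) ^ (-a) ≤ F l ∧ F l ≤ (A + δ) * (-l) ^ (-a) := by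
      intro l hl
      have hl0 : 0 < -l := by linarith [hl.2]
      have hd := hbound l (hsubset hl)
      rw [Real.dist_eq, abs_lt] at hd
      have hpow : (0:ℝ) < (-l) ^ a := Real.rpow_pos_of_pos hl0 a
      have hrw : (-l) ^ (-a) = ((-l) ^ a)⁻¹ := Real.rpow_neg hl0.le a
      constructor
      · rw [hrw, mul_inv_le_iff₀ hpow]
        nlinarith [hd.1]
      · rw [hrw, le_mul_inv_iff₀ hpow]
        nlinarith [hd.2]
    have hintF : IntegrableOn F (Ioo (-t) 0) := hFint' (-t) 0 (by linarith) le_rfl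
    have hint_lo : IntegrableOn (fun l => (A - δ) * (-l) ^ (-a)) (Ioo (-t) 0) :=
      (hmodel_int t).const_mul (A - δ)
    have hint_hi : IntegrableOn (fun l => (A + δ) * (-l) ^ (-a)) (Ioo (-t) 0) :=
      (hmodel_int t).const_mul (A + δ)
    have hlo : (A - δ) * (t ^ q / q) ≤ M - y := by
      have h1 : (∫ l in Ioo (-t) 0, (A - δ) * (-l) ^ (-a)) ≤ ∫ l in Ioo (-t) 0, F l :=
        setIntegral_mono_on hint_lo hintF measurableSet_Ioo (fun x hx => (hFb x hx).1)
      rw [integral_const_mul, hmodel_val t htpos] at h1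
      have h2 : (∫ l in Ioo (-t) 0, F l) = M - y := by
        rw [show Ioo (-t) 0 = Ioo (Λ y) 0 by rw [ht_def, neg_neg]]
        exact htail y hymem
      linarith
    have hhi : M - y ≤ (A + δ) * (t ^ q / q) := by
      have h1 : (∫ l in Ioo (-t) 0, F l) ≤ ∫ l in Ioo (-t) 0, (A + δ) * (-l) ^ (-a) :=
        setIntegral_mono_on hintF hint_hi measurableSet_Ioo (fun x hx => (hFb x hx).2)
      rw [integral_const_mul, hmodel_val t htpos] at h1
      have h2 : (∫ l in Ioo (-t) 0, F l) = M - y := by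
        rw [show Ioo (-t) 0 = Ioo (Λ y) 0 by rw [ht_def, neg_neg]]
        exact htail y hymem
      linarith
    -- conclude |g y - 1| < ε
    have htq : (0:ℝ) < t ^ q := Real.rpow_pos_of_pos htpos q
    have hgy : g y = q * (M - y) / A / t ^ q := by rw [hg_def]
    have hhi' : q * (M - y) ≤ (A + δ) * t ^ q := by
      have h := mul_le_mul_of_nonneg_right hhi hq.le
      calc q * (M - y) = (M - y) * q := mul_comm _ _
        _ ≤ (A + δ) * (t ^ q / q) * q := h
        _ = (A + δ) * t ^ q := by field_simp
    have hlo' : (A - δ) * t ^ q ≤ q * (M - y) := by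
      have h := mul_le_mul_of_nonneg_right hlo hq.le
      calc (A - δ) * t ^ q = (A - δ) * (t ^ q / q) * q := by field_simp
        _ ≤ (M - y) * q := h
        _ = q * (M - y) := mul_comm _ _
    have hub : q * (M - y) / A / t ^ q ≤ 1 + ε / 2 := by
      rw [div_le_iff₀ htq, div_le_iff₀ hA]
      calc q * (M - y) ≤ (A + δ) * t ^ q := hhi'
        _ = (1 + ε / 2) * t ^ q * A := by rw [hδ_def]; ring
    have hlb : 1 - ε / 2 ≤ q * (M - y) / A / t ^ q := by
      rw [le_div_iff₀ htq, le_div_iff₀ hA]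
      calc (1 - ε / 2) * t ^ q * A = (A - δ) * t ^ q := by rw [hδ_def]; ring
        _ ≤ q * (M - y) := hlo'
    rw [Real.dist_eq, hgy, abs_lt]
    constructor <;> linarith
  -- first part
  have part1 : Filter.Tendsto (fun y => Λ y /
      (-(((2 * p - 1) * (M - y) / (2 * p * A)) ^ (2 * p / (2 * p - 1)))))
      (nhdsWithin M (Iio M)) (nhds 1) := by
    have hcont : Filter.Tendsto (fun x : ℝ => x ^ (-(1/q)))
        (nhds 1) (nhds 1) := by
      have := (Real.continuousAt_rpow_const 1 (-(1/q)) (Or.inl one_ne_zero)).tendsto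
      simpa [Real.one_rpow] using this
    have hcomp : Filter.Tendsto (fun y => g y ^ (-(1/q)))
        (nhdsWithin M (Iio M)) (nhds 1) := hcont.comp hg_tendsto
    apply hcomp.congr'
    filter_upwards [hΛev (L/2) (by linarith) (by linarith)] with y ⟨hΛmem, hymem⟩
    set t : ℝ := -Λ y with ht_def
    have htpos : 0 < t := by simp [ht_def]; exact hΛmem.2
    have hMy : 0 < M - y := by have := hymem.2; linarith
    have htq : (0:ℝ) < t ^ q := Real.rpow_pos_of_pos htpos q
    have hgy : 0 < g y := by
      rw [hg_def]
      positivity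
    have hbase : q * (M - y) / A = g y * t ^ q := by
      rw [hg_def]
      simp only
      rw [← ht_def, div_mul_cancel₀ _ (ne_of_gt htq)]
    have hD : ((2 * p - 1) * (M - y) / (2 * p * A)) ^ (2 * p / (2 * p - 1))
        = g y ^ (1/q) * t := by
      rw [hcoef (M - y), hexp, hbase, Real.mul_rpow hgy.le htq.le,
        ← Real.rpow_mul htpos.le, mul_one_div, div_self (ne_of_gt hq), Real.rpow_one]
    rw [hD]
    have hgq : (0:ℝ) < g y ^ (1/q) := Real.rpow_pos_of_pos hgy _
    have hΛne : Λ y ≠ 0 := ne_of_lt hΛmem.2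
    rw [Real.rpow_neg hgy.le, ht_def, mul_neg, neg_neg, mul_comm,
      div_mul_cancel_left₀ hΛne _]
  refine ⟨part1, ?_⟩
  -- second part
  intro j hj
  have hc : (0:ℝ) < (j:ℝ) - 1/2 := by
    have : (1:ℝ) ≤ (j:ℝ) := by exact_mod_cast hj
    linarith
  set c : ℝ := (j:ℝ) - 1/2 with hc_def
  have hφ : Filter.Tendsto (fun ε : ℝ => M - ε * c)
      (nhdsWithin 0 (Ioi 0)) (nhdsWithin M (Iio M)) := by
    apply tendsto_nhdsWithin_of_tendsto_nhds_of_eventually_within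
    · have : Filter.Tendsto (fun ε : ℝ => M - ε * c) (nhds 0) (nhds (M - 0 * c)) := by
        exact (tendsto_const_nhds.sub ((continuous_id.mul continuous_const).tendsto 0))
      simpa using this.mono_left nhdsWithin_le_nhds
    · filter_upwards [self_mem_nhdsWithin] with ε hε
      have : 0 < ε * c := mul_pos hε hc
      simp only [mem_Iio]; linarith
  have := part1.comp hφ
  apply this.congr
  intro ε
  simp only [Function.comp_apply, sub_sub_cancel]
end
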